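/- arXiv:1906.01889 — 6 statements merged into one kernel-verified Lean document; each statement's English description precedes it below -/
import Mathlib

section
/- Assume the dual orbit setup. For a continuous compactly supported function f : Q × V → ℂ, define its Kohn–Nirenberg kernel K_f : V × V → ℂ by K_f(v,v') := ∫_{V̂} ξ(v−v') · f(g(ξ), v') dν(ξ). Given continuous compactly supported f₁, f₂ : Q × V → ℂ, define f₃ : Q × V → ℂ by f₃(q',v) := ∫_{Q×V} φ(q)(w−v) · conj(φ(q')(w−v)) · f₁(q',w) · f₂(q,v) · |q|⁻¹ dμ_Q(q) dμ_V(w). Then all these integrals converge absolutely and, for all (v,v') ∈ V × V, ∫_V K_{f₁}(v,w) · K_{f₂}(w,v') dμ_V(w) = K_{f₃}(v,v'). (The composition of Kohn–Nirenberg kernels is the kernel of the explicit twisted product f₁ ⋆ f₂ = f₃.) -/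
/-!
Substituting `ξ = φ(q)`, which by the dual orbit assumptions turns `ν` into `|q|⁻¹ dμQ(q)`, gives
`K_f(v,v') = ∫_Q |q|⁻¹ φ(q)(v−v') f(q,v') dμQ(q)`. The kernel composition then becomes an integral
over `Q × Q × V`, and the character identity `φ(q')(v−v') · conj φ(q')(w−v') = φ(q')(v−w)` turns
the kernel of the twisted product into the same integral taken in another order, so Fubini
concludes.

Absolute convergence comes from `|q|⁻¹` being bounded on compact sets. The modulus is measurable
since `|q| = m(q⁻¹B) / m(B)` for the measure `m = |q|⁻¹ dμQ(q)` and any `B` with `0 < m(B) < ∞`,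
such as the preimage under `φ` of a compact neighbourhood in `V̂` (as `φ` carries `m` to the Haar
measure `ν`); a measurable homomorphism to the positive reals is then locally bounded by
Steinhaus' theorem.
-/

open MeasureTheory
open scoped ENNReal

/-- The Kohn–Nirenberg kernel of a function `f` on `G = Q ⋉ V`:
`K_f(v,v') = ∫_{V̂} ξ(v−v') · f(g(ξ), v') dν(ξ)` (the abelian group `V` is written
multiplicatively, so `v − v'` is `v / v'`). -/
noncomputable def knKer {Q V : Type*} [CommGroup V] [TopologicalSpace V]
    [MeasurableSpace (PontryaginDual V)]
    (ν : Measure (PontryaginDual V)) (g : PontryaginDual V → Q)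
    (f : Q × V → ℂ) (v v' : V) : ℂ :=
  ∫ ξ : PontryaginDual V, ((ξ (v / v') : ℂ)) * f (g ξ, v') ∂ν

/-- The twisted product `f₁ ⋆ f₂ = f₃` on functions on `G = Q ⋉ V`:
`f₃(q',v) = ∫_{Q×V} φ(q)(w−v) · conj(φ(q')(w−v)) · f₁(q',w) · f₂(q,v) · |q|⁻¹ dμQ(q) dμV(w)`. -/
noncomputable def twistedProd {Q V : Type*} [CommGroup V] [TopologicalSpace V]
    [MeasurableSpace Q] [MeasurableSpace V]
    (μQ : Measure Q) (μV : Measure V) (φ : Q → PontryaginDual V) (mod : Q → ℝ)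
    (f₁ f₂ : Q × V → ℂ) : Q × V → ℂ :=
  fun x =>
    ∫ p : Q × V,
      ((φ p.1 (p.2 / x.2) : ℂ)) * (starRingEnd ℂ) ((φ x.1 (p.2 / x.2) : ℂ)) *
        f₁ (x.1, p.2) * f₂ (p.1, x.2) * (((mod p.1)⁻¹ : ℝ) : ℂ) ∂(μQ.prod μV)

open Set Bornology

theorem MeasureTheory.Integrable.bdd_mul_of_forall_ne_zero {α 𝕜 : Type*} [MeasurableSpace α]
    {μ : Measure α} [NormedRing 𝕜] {f h : α → 𝕜} {C : ℝ} (hf : Integrable f μ)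
    (hh : AEStronglyMeasurable h μ) (hC : ∀ x, f x ≠ 0 → ‖h x‖ ≤ C) :
    Integrable (fun x => h x * f x) μ := by
  refine (hf.norm.const_mul C).mono' (hh.mul hf.1) (ae_of_all _ fun x => ?_)
  by_cases hx : f x = 0
  · simp [hx]
  · exact (norm_mul_le _ _).trans (mul_le_mul_of_nonneg_right (hC x hx) (norm_nonneg _))

theorem MonoidHom.isBounded_image_of_measurable {G H : Type*} [Group G] [TopologicalSpace G]
    [IsTopologicalGroup G] [LocallyCompactSpace G] [MeasurableSpace G] [BorelSpace G]
    [SeminormedGroup H] [MeasurableSpace H] [OpensMeasurableSpace H]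
    (f : G →* H) (hf : Measurable f) {K : Set G} (hK : IsCompact K) : IsBounded (f '' K) := by
  refine hK.induction_on (by simp) (fun s t hst ht => ht.subset (image_mono hst))
    (fun s t hs ht => by rw [image_union]; exact hs.union ht) fun x _ => ?_
  obtain ⟨s, hs, hbdd⟩ := f.exists_nhds_isBounded hf x
  exact ⟨s, mem_nhdsWithin_of_mem_nhds hs, hbdd⟩

section Modulus

variable {Q : Type*} [Group Q] {mod : Q → ℝ}

theorem exists_inv_le_of_isCompact [TopologicalSpace Q] [IsTopologicalGroup Q]
    [LocallyCompactSpace Q] [MeasurableSpace Q] [BorelSpace Q]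
    (hpos : ∀ q, 0 < mod q) (hmul : ∀ q q', mod (q * q') = mod q * mod q')
    (hmeas : Measurable mod) {K : Set Q} (hK : IsCompact K) : ∃ C, ∀ q ∈ K, (mod q)⁻¹ ≤ C := by
  let : MeasurableSpace (Multiplicative ℝ) := borel (Multiplicative ℝ)
  have : BorelSpace (Multiplicative ℝ) := ⟨rfl⟩
  let logMod : Q →* Multiplicative ℝ :=
    { toFun := fun q => .ofAdd (Real.log (mod q))
      map_one' := by
        have h := hmul 1 1
        rw [one_mul, left_eq_mul₀ (hpos 1).ne'] at h
        simp [h]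
      map_mul' := fun q q' => by
        simp [hmul, Real.log_mul (hpos q).ne' (hpos q').ne', ← ofAdd_add] }
  have hlogMod : Measurable logMod := Real.measurable_log.comp hmeas
  obtain ⟨R, hR⟩ := (logMod.isBounded_image_of_measurable hlogMod hK).exists_norm_le
  refine ⟨Real.exp R, fun q hq => ?_⟩
  have hlog : |Real.log (mod q)| ≤ R := hR _ (mem_image_of_mem _ hq)
  calc (mod q)⁻¹ = Real.exp (-Real.log (mod q)) := by rw [Real.exp_neg, Real.exp_log (hpos q)]
    _ ≤ Real.exp R := Real.exp_le_exp.2 ((neg_le_abs _).trans hlog)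

theorem withDensity_preimage_mul_left [MeasurableSpace Q] [MeasurableMul Q] (μ : Measure Q)
    [μ.IsMulLeftInvariant] (hpos : ∀ q, 0 < mod q) (hmul : ∀ q q', mod (q * q') = mod q * mod q')
    (q : Q) {B : Set Q} (hB : MeasurableSet B) :
    μ.withDensity (fun x => ENNReal.ofReal (mod x)⁻¹) ((q * ·) ⁻¹' B) =
      ENNReal.ofReal (mod q) * μ.withDensity (fun x => ENNReal.ofReal (mod x)⁻¹) B := by
  have hsplit : ∀ x, ((q * ·) ⁻¹' B).indicator (fun x => ENNReal.ofReal (mod x)⁻¹) x =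
      ENNReal.ofReal (mod q) * B.indicator (fun x => ENNReal.ofReal (mod x)⁻¹) (q * x) := by
    intro x
    by_cases hx : q * x ∈ B
    · rw [indicator_of_mem (show x ∈ (q * ·) ⁻¹' B from hx), indicator_of_mem hx,
        ← ENNReal.ofReal_mul (hpos q).le, hmul, mul_inv, ← mul_assoc,
        mul_inv_cancel₀ (hpos q).ne', one_mul]
    · rw [indicator_of_notMem (show x ∉ (q * ·) ⁻¹' B from hx), indicator_of_notMem hx,
        mul_zero]
  rw [withDensity_apply _ (measurable_const_mul q hB), withDensity_apply _ hB,
    ← lintegral_indicator (measurable_const_mul q hB), ← lintegral_indicator hB]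
  simp_rw [hsplit]
  rw [lintegral_const_mul' _ _ ENNReal.ofReal_ne_top, lintegral_mul_left_eq_self]

theorem measurable_of_withDensity [MeasurableSpace Q] [MeasurableMul₂ Q] (μ : Measure Q)
    [SFinite μ] [μ.IsMulLeftInvariant] (hpos : ∀ q, 0 < mod q)
    (hmul : ∀ q q', mod (q * q') = mod q * mod q') {B : Set Q} (hB : MeasurableSet B)
    (hB₀ : μ.withDensity (fun x => ENNReal.ofReal (mod x)⁻¹) B ≠ 0)
    (hB_top : μ.withDensity (fun x => ENNReal.ofReal (mod x)⁻¹) B ≠ ⊤) : Measurable mod := by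
  set m := μ.withDensity (fun x => ENNReal.ofReal (mod x)⁻¹)
  have hmod : mod = fun q => (m ((q * ·) ⁻¹' B) / m B).toReal := by
    ext q
    rw [withDensity_preimage_mul_left μ hpos hmul q hB, mul_div_assoc,
      ENNReal.div_self hB₀ hB_top, mul_one, ENNReal.toReal_ofReal (hpos q).le]
  rw [hmod]
  exact ((measurable_measure_prodMk_left
    (measurable_mul hB : MeasurableSet {p : Q × Q | p.1 * p.2 ∈ B})).div_const _).ennreal_toReal

theorem measurable_of_map_withDensity_eq {X : Type*} [MeasurableSpace Q] [MeasurableMul₂ Q]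
    {μ : Measure Q} [SFinite μ] [μ.IsMulLeftInvariant] (hpos : ∀ q, 0 < mod q)
    (hmul : ∀ q q', mod (q * q') = mod q * mod q') [TopologicalSpace X] [WeaklyLocallyCompactSpace X]
    [MeasurableSpace X] [OpensMeasurableSpace X] {ν : Measure X} [ν.IsOpenPosMeasure]
    [IsFiniteMeasureOnCompacts ν] {φ : Q → X} (hφ : Measurable φ)
    (hν : (μ.withDensity fun q => ENNReal.ofReal (mod q)⁻¹).map φ = ν) : Measurable mod := by
  obtain ⟨K, hK, hKφ⟩ := exists_compact_mem_nhds (φ 1)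
  have hU : MeasurableSet (interior K) := isOpen_interior.measurableSet
  have hνU : (μ.withDensity fun q => ENNReal.ofReal (mod q)⁻¹) (φ ⁻¹' interior K) =
      ν (interior K) := by
    rw [← hν, Measure.map_apply hφ hU]
  refine measurable_of_withDensity μ hpos hmul (hφ hU) ?_ ?_ <;> rw [hνU]
  · exact (isOpen_interior.measure_pos ν ⟨_, mem_interior_iff_mem_nhds.2 hKφ⟩).ne'
  · exact ((measure_mono interior_subset).trans_lt hK.measure_lt_top).ne

end Modulus

section WithDensityMap

variable {α β E : Type*} [MeasurableSpace α] [MeasurableSpace β] [NormedAddCommGroup E]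
  [NormedSpace ℝ E] {μ : Measure α} {w : α → ℝ} {φ : α → β} {F : β → E}

theorem integral_map_withDensity_ofReal (hw : Measurable w) (hw₀ : ∀ a, 0 ≤ w a)
    (hφ : Measurable φ)
    (hF : AEStronglyMeasurable F ((μ.withDensity fun a => ENNReal.ofReal (w a)).map φ)) :
    ∫ y, F y ∂(μ.withDensity fun a => ENNReal.ofReal (w a)).map φ = ∫ a, w a • F (φ a) ∂μ := by
  rw [integral_map hφ.aemeasurable hF]
  refine (integral_withDensity_eq_integral_smul hw.real_toNNReal _).trans ?_
  simp_rw [NNReal.smul_def, Real.coe_toNNReal _ (hw₀ _)]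

theorem integrable_map_withDensity_ofReal_iff (hw : Measurable w) (hw₀ : ∀ a, 0 ≤ w a)
    (hφ : Measurable φ)
    (hF : AEStronglyMeasurable F ((μ.withDensity fun a => ENNReal.ofReal (w a)).map φ)) :
    Integrable F ((μ.withDensity fun a => ENNReal.ofReal (w a)).map φ) ↔
      Integrable (fun a => w a • F (φ a)) μ := by
  rw [integrable_map_measure hF hφ.aemeasurable]
  refine (integrable_withDensity_iff_integrable_smul hw.real_toNNReal).trans ?_
  simp_rw [NNReal.smul_def, Real.coe_toNNReal _ (hw₀ _), Function.comp_def]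

end WithDensityMap

section PontryaginDual

variable {V : Type*} [CommGroup V] [TopologicalSpace V]

theorem PontryaginDual.coe_apply_div (ξ : PontryaginDual V) (a b : V) :
    ((ξ (a / b) : Circle) : ℂ) = ξ a * (starRingEnd ℂ) (ξ b) := by
  rw [map_div, Circle.coe_div, ← Circle.coe_inv_eq_conj, Circle.coe_inv, div_eq_mul_inv]

@[fun_prop]
theorem Measurable.pontryaginDual_apply [LocallyCompactSpace V] [SecondCountableTopology V]
    [MeasurableSpace V] [OpensMeasurableSpace V] [MeasurableSpace (PontryaginDual V)]
    [OpensMeasurableSpace (PontryaginDual V)] {α : Type*} [MeasurableSpace α] {ξ : α → PontryaginDual V}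
    {u : α → V} (hξ : Measurable ξ) (hu : Measurable u) :
    Measurable fun a => ((ξ a (u a) : Circle) : ℂ) := by
  have hev : Continuous fun p : PontryaginDual V × V => ((p.1 p.2 : Circle) : ℂ) :=
    continuous_induced_dom.comp (continuous_eval (F := ContinuousMonoidHom V Circle))
  exact hev.measurable.comp (hξ.prodMk hu)

end PontryaginDual

section KohnNirenberg

variable {Q V : Type*} [CommGroup V] [TopologicalSpace V] {mod : Q → ℝ}
  {φ : Q → PontryaginDual V}

noncomputable def knKerIntegrand (mod : Q → ℝ) (φ : Q → PontryaginDual V) (f : Q × V → ℂ)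
    (v v' : V) (q : Q) : ℂ :=
  (((mod q)⁻¹ : ℝ) : ℂ) * (φ q (v / v') : ℂ) * f (q, v')

theorem smul_apply_comp_eq_knKerIntegrand {g : PontryaginDual V → Q} (hgφ : ∀ q, g (φ q) = q)
    (f : Q × V → ℂ) (v v' : V) :
    (fun q => (mod q)⁻¹ • ((φ q (v / v') : ℂ) * f (g (φ q), v'))) =
      knKerIntegrand mod φ f v v' := by
  ext q
  simp [knKerIntegrand, hgφ, Complex.real_smul, mul_assoc]

theorem knKerIntegrand_twistedProd [MeasurableSpace Q] [MeasurableSpace V] (μQ : Measure Q)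
    (μV : Measure V) (f₁ f₂ : Q × V → ℂ) (v v' : V) (q' : Q) :
    knKerIntegrand mod φ (twistedProd μQ μV φ mod f₁ f₂) v v' q' =
      ∫ p : Q × V, knKerIntegrand mod φ f₁ v p.2 q' * knKerIntegrand mod φ f₂ p.2 v' p.1
        ∂(μQ.prod μV) := by
  simp only [knKerIntegrand, twistedProd, ← integral_const_mul]
  congr 1
  ext p
  have hchar : (φ q' (v / p.2) : ℂ) = φ q' (v / v') * (starRingEnd ℂ) (φ q' (p.2 / v')) := by
    rw [← PontryaginDual.coe_apply_div, div_div_div_cancel_right]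
  rw [hchar]
  ring

variable [MeasurableSpace Q] [LocallyCompactSpace V] [SecondCountableTopology V]
  [MeasurableSpace V] [BorelSpace V] [MeasurableSpace (PontryaginDual V)]
  [OpensMeasurableSpace (PontryaginDual V)] {μQ : Measure Q} {μV : Measure V}
  {ν : Measure (PontryaginDual V)} {g : PontryaginDual V → Q}

theorem knKer_eq_integral_knKerIntegrand
    (hν : (μQ.withDensity fun q => ENNReal.ofReal (mod q)⁻¹).map φ = ν)
    (hmodpos : ∀ q, 0 < mod q) (hmod : Measurable mod) (hφ : Measurable φ) (hg : Measurable g)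
    (hgφ : ∀ q, g (φ q) = q) {f : Q × V → ℂ} (hf : Measurable f) (v v' : V) :
    knKer ν g f v v' = ∫ q, knKerIntegrand mod φ f v v' q ∂μQ := by
  have hF : AEStronglyMeasurable (fun ξ : PontryaginDual V => (ξ (v / v') : ℂ) * f (g ξ, v')) ν :=
    by fun_prop
  subst hν
  rw [knKer, integral_map_withDensity_ofReal (w := fun q => (mod q)⁻¹) hmod.inv
    (fun q => (inv_pos.2 (hmodpos q)).le) hφ hF, smul_apply_comp_eq_knKerIntegrand hgφ]

theorem integrable_knKer_integrand_iff
    (hν : (μQ.withDensity fun q => ENNReal.ofReal (mod q)⁻¹).map φ = ν)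
    (hmodpos : ∀ q, 0 < mod q) (hmod : Measurable mod) (hφ : Measurable φ) (hg : Measurable g)
    (hgφ : ∀ q, g (φ q) = q) {f : Q × V → ℂ} (hf : Measurable f) (v v' : V) :
    Integrable (fun ξ : PontryaginDual V => (ξ (v / v') : ℂ) * f (g ξ, v')) ν ↔
      Integrable (knKerIntegrand mod φ f v v') μQ := by
  have hF : AEStronglyMeasurable (fun ξ : PontryaginDual V => (ξ (v / v') : ℂ) * f (g ξ, v')) ν :=
    by fun_prop
  subst hν
  rw [integrable_map_withDensity_ofReal_iff (w := fun q => (mod q)⁻¹) hmod.inv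
    (fun q => (inv_pos.2 (hmodpos q)).le) hφ hF, smul_apply_comp_eq_knKerIntegrand hgφ]

theorem knKer_mul_knKer_eq_integral
    (hν : (μQ.withDensity fun q => ENNReal.ofReal (mod q)⁻¹).map φ = ν)
    (hmodpos : ∀ q, 0 < mod q) (hmod : Measurable mod) (hφ : Measurable φ) (hg : Measurable g)
    (hgφ : ∀ q, g (φ q) = q) {f₁ f₂ : Q × V → ℂ} (hf₁ : Measurable f₁) (hf₂ : Measurable f₂)
    (v w v' : V) :
    knKer ν g f₁ v w * knKer ν g f₂ w v' =
      ∫ q, ∫ q', knKerIntegrand mod φ f₁ v w q' * knKerIntegrand mod φ f₂ w v' q ∂μQ ∂μQ := by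
  rw [knKer_eq_integral_knKerIntegrand hν hmodpos hmod hφ hg hgφ hf₁,
    knKer_eq_integral_knKerIntegrand hν hmodpos hmod hφ hg hgφ hf₂, ← integral_const_mul]
  simp_rw [integral_mul_const]

theorem integrable_knKer_mul_knKer [SFinite μQ] [SFinite μV]
    (hν : (μQ.withDensity fun q => ENNReal.ofReal (mod q)⁻¹).map φ = ν)
    (hmodpos : ∀ q, 0 < mod q) (hmod : Measurable mod) (hφ : Measurable φ) (hg : Measurable g)
    (hgφ : ∀ q, g (φ q) = q) {f₁ f₂ : Q × V → ℂ} (hf₁ : Measurable f₁) (hf₂ : Measurable f₂)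
    {v v' : V} (hΦ : Integrable (fun r : Q × (Q × V) =>
      knKerIntegrand mod φ f₁ v r.2.2 r.1 * knKerIntegrand mod φ f₂ r.2.2 v' r.2.1)
      (μQ.prod (μQ.prod μV))) :
    Integrable (fun w => knKer ν g f₁ v w * knKer ν g f₂ w v') μV := by
  simpa only [knKer_mul_knKer_eq_integral hν hmodpos hmod hφ hg hgφ hf₁ hf₂] using
    hΦ.integral_prod_right.integral_prod_right

theorem measurable_twistedProd [IsTopologicalGroup V] [SFinite μQ] [SFinite μV] (hmod : Measurable mod)
    (hφ : Measurable φ) {f₁ f₂ : Q × V → ℂ} (hf₁ : Measurable f₁) (hf₂ : Measurable f₂) :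
    Measurable (twistedProd μQ μV φ mod f₁ f₂) :=
  (StronglyMeasurable.integral_prod_right (by fun_prop)).measurable

theorem integral_knKer_mul_knKer [IsTopologicalGroup V] [SFinite μQ] [SFinite μV]
    (hν : (μQ.withDensity fun q => ENNReal.ofReal (mod q)⁻¹).map φ = ν)
    (hmodpos : ∀ q, 0 < mod q) (hmod : Measurable mod) (hφ : Measurable φ) (hg : Measurable g)
    (hgφ : ∀ q, g (φ q) = q) {f₁ f₂ : Q × V → ℂ} (hf₁ : Measurable f₁) (hf₂ : Measurable f₂)
    {v v' : V} (hΦ : Integrable (fun r : Q × (Q × V) =>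
      knKerIntegrand mod φ f₁ v r.2.2 r.1 * knKerIntegrand mod φ f₂ r.2.2 v' r.2.1)
      (μQ.prod (μQ.prod μV))) :
    ∫ w, knKer ν g f₁ v w * knKer ν g f₂ w v' ∂μV =
      knKer ν g (twistedProd μQ μV φ mod f₁ f₂) v v' := by
  calc ∫ w, knKer ν g f₁ v w * knKer ν g f₂ w v' ∂μV
      = ∫ w, ∫ q, ∫ q', knKerIntegrand mod φ f₁ v w q' * knKerIntegrand mod φ f₂ w v' q
          ∂μQ ∂μQ ∂μV := by
        simp_rw [knKer_mul_knKer_eq_integral hν hmodpos hmod hφ hg hgφ hf₁ hf₂]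
    _ = ∫ p : Q × V, ∫ q', knKerIntegrand mod φ f₁ v p.2 q' * knKerIntegrand mod φ f₂ p.2 v' p.1
          ∂μQ ∂(μQ.prod μV) := (integral_prod_symm _ hΦ.integral_prod_right).symm
    _ = ∫ q', ∫ p : Q × V, knKerIntegrand mod φ f₁ v p.2 q' * knKerIntegrand mod φ f₂ p.2 v' p.1
          ∂(μQ.prod μV) ∂μQ := (integral_integral_swap hΦ).symm
    _ = knKer ν g (twistedProd μQ μV φ mod f₁ f₂) v v' := by
        rw [knKer_eq_integral_knKerIntegrand hν hmodpos hmod hφ hg hgφ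
          (measurable_twistedProd hmod hφ hf₁ hf₂)]
        simp_rw [knKerIntegrand_twistedProd]

variable [Group Q] [TopologicalSpace Q] [IsTopologicalGroup Q] [LocallyCompactSpace Q]
  [BorelSpace Q] [IsFiniteMeasureOnCompacts μQ]

theorem integrable_knKerIntegrand (hmodpos : ∀ q, 0 < mod q)
    (hmodmul : ∀ q q', mod (q * q') = mod q * mod q') (hmod : Measurable mod)
    (hφ : Measurable φ) {f : Q × V → ℂ} (hf : Continuous f) (hfs : HasCompactSupport f)
    (v v' : V) : Integrable (knKerIntegrand mod φ f v v') μQ := by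
  obtain ⟨C, hC⟩ := exists_inv_le_of_isCompact hmodpos hmodmul hmod (hfs.image continuous_fst)
  have hslice : Integrable (fun q => f (q, v')) μQ :=
    (hf.comp (by fun_prop)).integrable_of_hasCompactSupport
      (.of_support_subset_isCompact (hfs.image continuous_fst)
        fun q hq => ⟨_, subset_tsupport f hq, rfl⟩)
  refine hslice.bdd_mul_of_forall_ne_zero (C := C) (by fun_prop) fun q hq => ?_
  rw [norm_mul, Circle.norm_coe, mul_one, Complex.norm_of_nonneg (inv_pos.2 (hmodpos q)).le]
  exact hC q ⟨_, subset_tsupport f hq, rfl⟩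

variable [IsTopologicalGroup V] [IsFiniteMeasureOnCompacts μV]

theorem integrable_twistedProd_integrand (hmodpos : ∀ q, 0 < mod q)
    (hmodmul : ∀ q q', mod (q * q') = mod q * mod q') (hmod : Measurable mod)
    (hφ : Measurable φ) {f₁ f₂ : Q × V → ℂ} (hf₁ : Continuous f₁) (hf₁s : HasCompactSupport f₁)
    (hf₂ : Continuous f₂) (hf₂s : HasCompactSupport f₂) (x : Q × V) :
    Integrable (fun p : Q × V => ((φ p.1 (p.2 / x.2) : ℂ)) *
        (starRingEnd ℂ) ((φ x.1 (p.2 / x.2) : ℂ)) * f₁ (x.1, p.2) * f₂ (p.1, x.2) *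
          (((mod p.1)⁻¹ : ℝ) : ℂ)) (μQ.prod μV) := by
  obtain ⟨C, hC⟩ := exists_inv_le_of_isCompact hmodpos hmodmul hmod (hf₂s.image continuous_fst)
  have hF : Integrable (fun p : Q × V => f₁ (x.1, p.2) * f₂ (p.1, x.2)) (μQ.prod μV) := by
    refine (by fun_prop : Continuous _).integrable_of_hasCompactSupport
      (.of_support_subset_isCompact ((hf₂s.image continuous_fst).prod
        (hf₁s.image continuous_snd)) fun p hp => ?_)
    exact ⟨⟨_, subset_tsupport f₂ (right_ne_zero_of_mul hp), rfl⟩,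
      ⟨_, subset_tsupport f₁ (left_ne_zero_of_mul hp), rfl⟩⟩
  refine (hF.bdd_mul_of_forall_ne_zero (C := C) (h := fun p => (((mod p.1)⁻¹ : ℝ) : ℂ) *
      (φ p.1 (p.2 / x.2) * (starRingEnd ℂ) (φ x.1 (p.2 / x.2))))
      (Measurable.aestronglyMeasurable (by fun_prop))
      fun p hp => ?_).congr (ae_of_all _ fun p => by ring)
  rw [norm_mul, norm_mul, Circle.norm_coe, RCLike.norm_conj, Circle.norm_coe, mul_one, mul_one,
    Complex.norm_of_nonneg (inv_pos.2 (hmodpos _)).le]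
  exact hC _ ⟨_, subset_tsupport f₂ (right_ne_zero_of_mul hp), rfl⟩

theorem integrable_knKerIntegrand_mul [SecondCountableTopology Q] (hmodpos : ∀ q, 0 < mod q)
    (hmodmul : ∀ q q', mod (q * q') = mod q * mod q') (hmod : Measurable mod)
    (hφ : Measurable φ) {f₁ f₂ : Q × V → ℂ} (hf₁ : Continuous f₁) (hf₁s : HasCompactSupport f₁)
    (hf₂ : Continuous f₂) (hf₂s : HasCompactSupport f₂) (v v' : V) :
    Integrable (fun r : Q × (Q × V) =>
      knKerIntegrand mod φ f₁ v r.2.2 r.1 * knKerIntegrand mod φ f₂ r.2.2 v' r.2.1)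
      (μQ.prod (μQ.prod μV)) := by
  obtain ⟨C₁, hC₁⟩ := exists_inv_le_of_isCompact hmodpos hmodmul hmod (hf₁s.image continuous_fst)
  obtain ⟨C₂, hC₂⟩ := exists_inv_le_of_isCompact hmodpos hmodmul hmod (hf₂s.image continuous_fst)
  have hF : Integrable (fun r : Q × (Q × V) => f₁ (r.1, r.2.2) * f₂ (r.2.1, v'))
      (μQ.prod (μQ.prod μV)) := by
    refine (by fun_prop : Continuous _).integrable_of_hasCompactSupport
      (.of_support_subset_isCompact ((hf₁s.image continuous_fst).prod
        ((hf₂s.image continuous_fst).prod (hf₁s.image continuous_snd))) fun r hr => ?_)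
    exact ⟨⟨_, subset_tsupport f₁ (left_ne_zero_of_mul hr), rfl⟩,
      ⟨_, subset_tsupport f₂ (right_ne_zero_of_mul hr), rfl⟩,
      ⟨_, subset_tsupport f₁ (left_ne_zero_of_mul hr), rfl⟩⟩
  refine (hF.bdd_mul_of_forall_ne_zero (C := C₁ * C₂) (h := fun r =>
      (((mod r.1)⁻¹ : ℝ) : ℂ) * φ r.1 (v / r.2.2) * ((((mod r.2.1)⁻¹ : ℝ) : ℂ) *
        φ r.2.1 (r.2.2 / v'))) (by fun_prop) fun r hr => ?_).congr
      (ae_of_all _ fun r => by simp only [knKerIntegrand]; ring)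
  have h₁ := hC₁ _ ⟨_, subset_tsupport f₁ (left_ne_zero_of_mul hr), rfl⟩
  have h₂ := hC₂ _ ⟨_, subset_tsupport f₂ (right_ne_zero_of_mul hr), rfl⟩
  rw [norm_mul, norm_mul, norm_mul, Circle.norm_coe, Circle.norm_coe, mul_one, mul_one,
    Complex.norm_of_nonneg (inv_pos.2 (hmodpos _)).le,
    Complex.norm_of_nonneg (inv_pos.2 (hmodpos _)).le]
  exact mul_le_mul h₁ h₂ (inv_pos.2 (hmodpos _)).le ((inv_pos.2 (hmodpos _)).le.trans h₁)

end KohnNirenberg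

theorem knKer_comp_eq_knKer_twistedProd_general
    (Q : Type*) [Group Q] [TopologicalSpace Q] [IsTopologicalGroup Q] [LocallyCompactSpace Q]
    [SecondCountableTopology Q] [MeasurableSpace Q] [BorelSpace Q]
    (μQ : Measure Q) [μQ.IsHaarMeasure]
    (V : Type*) [CommGroup V] [TopologicalSpace V] [IsTopologicalGroup V]
    [LocallyCompactSpace V] [SecondCountableTopology V] [MeasurableSpace V] [BorelSpace V]
    (μV : Measure V) [μV.IsHaarMeasure]
    [MeasurableSpace (PontryaginDual V)] [BorelSpace (PontryaginDual V)]
    (ν : Measure (PontryaginDual V)) [ν.IsHaarMeasure]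
    -- the action of `Q` on `V` by topological automorphisms, and its moduli
    (mod : Q → ℝ) (hmodpos : ∀ q, 0 < mod q)
    (hmodmul : ∀ q q' : Q, mod (q * q') = mod q * mod q')
    -- the dual orbit assumptions
    (φ : Q → PontryaginDual V)
    (hφmeas : Measurable φ)
    (hν : (μQ.withDensity fun q => ENNReal.ofReal (mod q)⁻¹).map φ = ν)
    (g : PontryaginDual V → Q) (hg : Measurable g) (hgφ : ∀ q : Q, g (φ q) = q)
    -- the two continuous compactly supported functions
    (f₁ f₂ : Q × V → ℂ) (hf₁c : Continuous f₁) (hf₁s : HasCompactSupport f₁)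
    (hf₂c : Continuous f₂) (hf₂s : HasCompactSupport f₂) :
    (∀ (f : Q × V → ℂ), Continuous f → HasCompactSupport f → ∀ v v' : V,
        Integrable (fun ξ : PontryaginDual V => ((ξ (v / v') : ℂ)) * f (g ξ, v')) ν) ∧
    (∀ x : Q × V,
        Integrable
          (fun p : Q × V =>
            ((φ p.1 (p.2 / x.2) : ℂ)) * (starRingEnd ℂ) ((φ x.1 (p.2 / x.2) : ℂ)) *
              f₁ (x.1, p.2) * f₂ (p.1, x.2) * (((mod p.1)⁻¹ : ℝ) : ℂ))
          (μQ.prod μV)) ∧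
    (∀ v v' : V,
        Integrable (fun w : V => knKer ν g f₁ v w * knKer ν g f₂ w v') μV) ∧
    ∀ v v' : V,
      (∫ w : V, knKer ν g f₁ v w * knKer ν g f₂ w v' ∂μV) =
        knKer ν g (twistedProd μQ μV φ mod f₁ f₂) v v' := by
  have hmod : Measurable mod := measurable_of_map_withDensity_eq hmodpos hmodmul hφmeas hν
  have hΦ := integrable_knKerIntegrand_mul (μQ := μQ) (μV := μV) hmodpos hmodmul hmod hφmeas
    hf₁c hf₁s hf₂c hf₂s
  refine ⟨fun f hf hfs v v' => ?_,
    integrable_twistedProd_integrand hmodpos hmodmul hmod hφmeas hf₁c hf₁s hf₂c hf₂s,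
    fun v v' => integrable_knKer_mul_knKer hν hmodpos hmod hφmeas hg hgφ hf₁c.measurable
      hf₂c.measurable (hΦ v v'),
    fun v v' => integral_knKer_mul_knKer hν hmodpos hmod hφmeas hg hgφ hf₁c.measurable
      hf₂c.measurable (hΦ v v')⟩
  exact (integrable_knKer_integrand_iff hν hmodpos hmod hφmeas hg hgφ hf.measurable v v').2
    (integrable_knKerIntegrand hmodpos hmodmul hmod hφmeas hf hfs v v')

/-- In the dual orbit setup, for continuous compactly supported
`f₁, f₂ : Q × V → ℂ`, all the integrals defining the Kohn–Nirenberg kernels `K_{f₁}, K_{f₂}`,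
the twisted product `f₃ = f₁ ⋆ f₂`, and the kernel composition converge absolutely, and
`∫_V K_{f₁}(v,w) K_{f₂}(w,v') dμV(w) = K_{f₃}(v,v')` for all `(v,v')`:
the composition of Kohn–Nirenberg kernels is the kernel of the twisted product. -/
theorem knKer_comp_eq_knKer_twistedProd
    (Q : Type*) [Group Q] [TopologicalSpace Q] [IsTopologicalGroup Q] [LocallyCompactSpace Q]
    [SecondCountableTopology Q] [MeasurableSpace Q] [BorelSpace Q]
    (μQ : Measure Q) [μQ.IsHaarMeasure]
    (V : Type*) [CommGroup V] [TopologicalSpace V] [IsTopologicalGroup V]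
    [LocallyCompactSpace V] [SecondCountableTopology V] [MeasurableSpace V] [BorelSpace V]
    (μV : Measure V) [μV.IsHaarMeasure]
    [MeasurableSpace (PontryaginDual V)] [BorelSpace (PontryaginDual V)]
    (ν : Measure (PontryaginDual V)) [ν.IsHaarMeasure]
    -- the action of `Q` on `V` by topological automorphisms, and its moduli
    (ρ : Q →* MulAut V) (hρcont : ∀ q : Q, Continuous (ρ q))
    (mod : Q → ℝ) (hmodpos : ∀ q, 0 < mod q)
    (hmodmul : ∀ q q' : Q, mod (q * q') = mod q * mod q')
    (hscale : ∀ q : Q, μV.map (ρ q) = (ENNReal.ofReal (mod q))⁻¹ • μV)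
    -- the dual orbit assumptions
    (ξ₀ : PontryaginDual V) (φ : Q → PontryaginDual V)
    (hφdef : ∀ (q : Q) (v : V), (φ q) v = ξ₀ ((ρ q)⁻¹ v))
    (hφinj : Function.Injective φ) (hφmeas : Measurable φ)
    (hφconull : ν (Set.range φ)ᶜ = 0)
    (hν : (μQ.withDensity fun q => ENNReal.ofReal (mod q)⁻¹).map φ = ν)
    (g : PontryaginDual V → Q) (hg : Measurable g) (hgφ : ∀ q : Q, g (φ q) = q)
    -- the two continuous compactly supported functions
    (f₁ f₂ : Q × V → ℂ) (hf₁c : Continuous f₁) (hf₁s : HasCompactSupport f₁)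
    (hf₂c : Continuous f₂) (hf₂s : HasCompactSupport f₂) :
    (∀ (f : Q × V → ℂ), Continuous f → HasCompactSupport f → ∀ v v' : V,
        Integrable (fun ξ : PontryaginDual V => ((ξ (v / v') : ℂ)) * f (g ξ, v')) ν) ∧
    (∀ x : Q × V,
        Integrable
          (fun p : Q × V =>
            ((φ p.1 (p.2 / x.2) : ℂ)) * (starRingEnd ℂ) ((φ x.1 (p.2 / x.2) : ℂ)) *
              f₁ (x.1, p.2) * f₂ (p.1, x.2) * (((mod p.1)⁻¹ : ℝ) : ℂ))
          (μQ.prod μV)) ∧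
    (∀ v v' : V,
        Integrable (fun w : V => knKer ν g f₁ v w * knKer ν g f₂ w v') μV) ∧
    ∀ v v' : V,
      (∫ w : V, knKer ν g f₁ v w * knKer ν g f₂ w v' ∂μV) =
        knKer ν g (twistedProd μQ μV φ mod f₁ f₂) v v' :=
  knKer_comp_eq_knKer_twistedProd_general Q μQ V μV ν mod hmodpos hmodmul φ hφmeas hν g hg hgφ f₁ f₂
    hf₁c hf₁s hf₂c hf₂s
end

section
/- Assume the dual orbit setup, and assume in addition that the pairing map Q × V → ℂ, (q,w) ↦ φ(q)(w), is continuous. Then the set of continuous compactly supported functions on Q × V is closed under the twisted product: for continuous compactly supported f₁, f₂ : Q × V → ℂ, the function f₃ defined by f₃(q',v) := ∫_{Q×V} φ(q)(w−v) · conj(φ(q')(w−v)) · f₁(q',w) · f₂(q,v) · |q|⁻¹ dμ_Q(q) dμ_V(w) is again continuous and compactly supported on Q × V. -/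
/-! The first point is that `q ↦ |q|⁻¹` is measurable. Since `ν` is locally finite and `φ` is
continuous, `μ' = |q|⁻¹ dμQ` is finite on compact sets, hence σ-finite; pick a measurable `s` with
`0 < μ'(s) < ∞`. Left invariance of `μQ` and multiplicativity of the modulus give
`μ'(q s) = |q|⁻¹ μ'(s)`, and the left side is measurable in `q` by Tonelli, so `q ↦ |q|⁻¹` is
measurable and, as the density of `μ'`, locally integrable. The integrand of the twisted product
is then dominated, uniformly in `(q', v)`, by `C |q|⁻¹` times the indicator of a compact set in
`(q, w)`, so dominated convergence gives continuity; and it vanishes identically when `q'` or `v`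
leaves the projection of the support of `f₁` resp. `f₂`. -/

open MeasureTheory Set
open scoped ENNReal

theorem isFiniteMeasureOnCompacts_of_map {α β : Type*} [MeasurableSpace α] [TopologicalSpace α]
    [MeasurableSpace β] [TopologicalSpace β] {μ : Measure α} {f : α → β} (hf : Continuous f)
    (hfm : AEMeasurable f μ) [IsFiniteMeasureOnCompacts (μ.map f)] :
    IsFiniteMeasureOnCompacts μ where
  lt_top_of_isCompact _ hK := (measure_mono (subset_preimage_image f _)).trans_lt
    ((Measure.le_map_apply hfm _).trans_lt (hK.image hf).measure_lt_top)

theorem locallyIntegrable_toReal_of_withDensity {α : Type*} [MeasurableSpace α]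
    [TopologicalSpace α] {μ : Measure α} {d : α → ℝ≥0∞} (hd : AEMeasurable d μ)
    [IsLocallyFiniteMeasure (μ.withDensity d)] :
    LocallyIntegrable (fun x => (d x).toReal) μ := fun x => by
  obtain ⟨U, hU, hfin⟩ := (μ.withDensity d).finiteAt_nhds x
  exact ⟨U, hU, integrable_toReal_of_lintegral_ne_top hd.restrict
    ((withDensity_apply_le d U).trans_lt hfin).ne⟩

section MultiplicativeDensity

variable {G : Type*} [Group G] [MeasurableSpace G] (μ : Measure G) {d : G → ℝ≥0∞}

theorem withDensity_preimage_mul_left_s9 [MeasurableMul G] [μ.IsMulLeftInvariant]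
    (hd : ∀ g h, d (g * h) = d g * d h) (hd_top : ∀ g, d g ≠ ∞) (g : G) {s : Set G}
    (hs : MeasurableSet s) :
    μ.withDensity d ((g⁻¹ * ·) ⁻¹' s) = d g * μ.withDensity d s := by
  have hs' : MeasurableSet ((g⁻¹ * ·) ⁻¹' s) := hs.preimage (measurable_const_mul _)
  rw [withDensity_apply _ hs', withDensity_apply _ hs, ← lintegral_indicator hs',
    ← lintegral_indicator hs, ← lintegral_mul_left_eq_self _ g,
    ← lintegral_const_mul' _ _ (hd_top g)]
  congr 1 with x
  by_cases hx : x ∈ s <;> simp [indicator, hx, hd]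

theorem measurable_of_withDensity_of_map_mul [MeasurableMul₂ G] [MeasurableInv G]
    [μ.IsMulLeftInvariant] (hd : ∀ g h, d (g * h) = d g * d h) (hd_top : ∀ g, d g ≠ ∞)
    [SigmaFinite (μ.withDensity d)] (h0 : μ.withDensity d ≠ 0) : Measurable d := by
  set μ' := μ.withDensity d
  obtain ⟨n, hpos⟩ := (Measure.exists_measure_inter_spanningSets_pos (μ := μ') univ).2
    (Measure.measure_univ_pos.2 h0)
  set s := univ ∩ spanningSets μ' n
  have hs : MeasurableSet s := MeasurableSet.univ.inter (measurableSet_spanningSets μ' n)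
  have hfin : μ' s ≠ ∞ :=
    ((measure_mono inter_subset_right).trans_lt (measure_spanningSets_lt_top μ' n)).ne
  have hrepr : d = fun g => μ' ((g⁻¹ * ·) ⁻¹' s) / μ' s := funext fun g => by
    rw [withDensity_preimage_mul_left_s9 μ hd hd_top g hs, ENNReal.mul_div_cancel_right hpos.ne' hfin]
  rw [hrepr]
  exact (measurable_measure_prodMk_left
    (hs.preimage (measurable_fst.inv.mul measurable_snd))).div_const _

end MultiplicativeDensity

section Support

variable {X Y M : Type*} [TopologicalSpace X] [TopologicalSpace Y] [Zero M] {f : X × Y → M}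

theorem apply_eq_zero_of_fst_notMem_closure {x : X × Y}
    (hx : x.1 ∉ closure (Prod.fst '' tsupport f)) : f x = 0 :=
  image_eq_zero_of_notMem_tsupport fun h => hx (subset_closure (mem_image_of_mem _ h))

theorem apply_eq_zero_of_snd_notMem_closure {x : X × Y}
    (hx : x.2 ∉ closure (Prod.snd '' tsupport f)) : f x = 0 :=
  image_eq_zero_of_notMem_tsupport fun h => hx (subset_closure (mem_image_of_mem _ h))

end Support

theorem norm_le_indicator_of_norm_le {α E : Type*} [SeminormedAddGroup E] {f : α → E}
    {s : Set α} {C : ℝ} (hC : ∀ x, ‖f x‖ ≤ C) (hs : ∀ x ∉ s, f x = 0) (x : α) :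
    ‖f x‖ ≤ s.indicator (fun _ => C) x := by
  by_cases hx : x ∈ s
  · simpa [hx] using hC x
  · simp [hx, hs x hx]

section TwistedProd

variable {Q V : Type*} [TopologicalSpace Q] [CommGroup V] [TopologicalSpace V]
  [IsTopologicalGroup V] {f₁ f₂ : Q × V → ℂ}

theorem continuous_twistedProd_kernel {φ : Q → PontryaginDual V}
    (hpair : Continuous fun p : Q × V => (φ p.1 p.2 : ℂ)) (hf₁ : Continuous f₁)
    (hf₂ : Continuous f₂) :
    Continuous fun z : (Q × V) × (Q × V) =>
      (φ z.2.1 (z.2.2 / z.1.2) : ℂ) * starRingEnd ℂ (φ z.1.1 (z.2.2 / z.1.2)) *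
        f₁ (z.1.1, z.2.2) * f₂ (z.2.1, z.1.2) := by
  have hdiff : Continuous fun z : (Q × V) × (Q × V) => z.2.2 / z.1.2 :=
    continuous_snd.snd.div' continuous_fst.snd
  exact (((hpair.comp (continuous_snd.fst.prodMk hdiff)).mul
    (continuous_star.comp (hpair.comp (continuous_fst.fst.prodMk hdiff)))).mul
      (hf₁.comp (continuous_fst.fst.prodMk continuous_snd.snd))).mul
    (hf₂.comp (continuous_snd.fst.prodMk continuous_fst.snd))

variable [MeasurableSpace Q] [MeasurableSpace V] (μQ : Measure Q) (μV : Measure V)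

theorem hasCompactSupport_twistedProd [R1Space Q] (φ : Q → PontryaginDual V) (mod : Q → ℝ)
    (hf₁ : HasCompactSupport f₁) (hf₂ : HasCompactSupport f₂) :
    HasCompactSupport (twistedProd μQ μV φ mod f₁ f₂) := by
  refine .intro' ((hf₁.image continuous_fst).closure.prod (hf₂.image continuous_snd).closure)
    (isClosed_closure.prod isClosed_closure) fun x hx => ?_
  rw [mem_prod, not_and_or] at hx
  rcases hx with hx | hx
  · have h₁ : ∀ w, f₁ (x.1, w) = 0 := fun w => apply_eq_zero_of_fst_notMem_closure hx
    simp [twistedProd, h₁]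
  · have h₂ : ∀ q, f₂ (q, x.2) = 0 := fun q => apply_eq_zero_of_snd_notMem_closure hx
    simp [twistedProd, h₂]

theorem continuous_twistedProd [R1Space Q] [SecondCountableTopology Q] [FirstCountableTopology V]
    [OpensMeasurableSpace Q] [OpensMeasurableSpace V] [IsFiniteMeasureOnCompacts μV]
    {φ : Q → PontryaginDual V} (hpair : Continuous fun p : Q × V => (φ p.1 p.2 : ℂ))
    {mod : Q → ℝ} (hmod : LocallyIntegrable (fun q => (mod q)⁻¹) μQ)
    (hf₁c : Continuous f₁) (hf₁s : HasCompactSupport f₁)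
    (hf₂c : Continuous f₂) (hf₂s : HasCompactSupport f₂) :
    Continuous (twistedProd μQ μV φ mod f₁ f₂) := by
  set KV := closure (Prod.snd '' tsupport f₁)
  set KQ := closure (Prod.fst '' tsupport f₂)
  obtain ⟨C₁, hC₁⟩ := hf₁c.bounded_above_of_compact_support hf₁s
  obtain ⟨C₂, hC₂⟩ := hf₂c.bounded_above_of_compact_support hf₂s
  have hb₁ (q : Q) (w : V) : ‖f₁ (q, w)‖ ≤ KV.indicator (fun _ => C₁) w :=
    norm_le_indicator_of_norm_le (fun _ => hC₁ _)
      (fun _ hw => apply_eq_zero_of_snd_notMem_closure hw) w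
  have hb₂ (q : Q) (v : V) : ‖f₂ (q, v)‖ ≤ KQ.indicator (fun _ => C₂) q :=
    norm_le_indicator_of_norm_le (fun _ => hC₂ _)
      (fun _ hq => apply_eq_zero_of_fst_notMem_closure hq) q
  set bound : Q × V → ℝ := fun p => KQ.indicator (fun q => C₂ * ‖(mod q)⁻¹‖) p.1 *
    KV.indicator (fun _ => C₁) p.2
  have hbound_int : Integrable bound (μQ.prod μV) := by
    refine Integrable.mul_prod ?_ ?_
    · exact (integrable_indicator_iff isClosed_closure.measurableSet).2
        ((hmod.integrableOn_isCompact (hf₂s.image continuous_fst).closure).norm.const_mul C₂)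
    · exact (integrable_indicator_iff isClosed_closure.measurableSet).2
        (integrableOn_const (hf₁s.image continuous_snd).closure.measure_lt_top.ne)
  have hkernel := continuous_twistedProd_kernel hpair hf₁c hf₂c
  refine continuous_of_dominated (bound := bound) (fun x => ?_)
    (fun x => ae_of_all _ fun p => ?_) hbound_int (ae_of_all _ fun p => ?_)
  · exact (hkernel.comp (continuous_const.prodMk continuous_id)).aestronglyMeasurable.mul
      (Complex.continuous_ofReal.comp_aestronglyMeasurable
        (hmod.aestronglyMeasurable.comp_quasiMeasurePreserving Measure.quasiMeasurePreserving_fst))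
  · calc _ = ‖f₁ (x.1, p.2)‖ * ‖f₂ (p.1, x.2)‖ * ‖(mod p.1)⁻¹‖ := by
          rw [norm_mul, norm_mul, norm_mul, norm_mul, Circle.norm_coe, RCLike.norm_conj,
            Circle.norm_coe, Complex.norm_real, one_mul, one_mul]
      _ ≤ KV.indicator (fun _ => C₁) p.2 * KQ.indicator (fun _ => C₂) p.1 * ‖(mod p.1)⁻¹‖ :=
        mul_le_mul_of_nonneg_right (mul_le_mul (hb₁ _ _) (hb₂ _ _) (norm_nonneg _)
          ((norm_nonneg _).trans (hb₁ x.1 _))) (norm_nonneg _)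
      _ = bound p := by
        simp only [bound, indicator_mul_left]
        ring
  · exact (hkernel.comp (continuous_id.prodMk continuous_const)).mul continuous_const

end TwistedProd

theorem twistedProd_continuous_compactly_supported_general
    (Q : Type*) [Group Q] [TopologicalSpace Q] [IsTopologicalGroup Q] [LocallyCompactSpace Q]
    [SecondCountableTopology Q] [MeasurableSpace Q] [BorelSpace Q]
    (μQ : Measure Q) [μQ.IsHaarMeasure]
    (V : Type*) [CommGroup V] [TopologicalSpace V] [IsTopologicalGroup V]
    [SecondCountableTopology V] [MeasurableSpace V] [BorelSpace V]
    (μV : Measure V) [μV.IsHaarMeasure]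
    [MeasurableSpace (PontryaginDual V)] (ν : Measure (PontryaginDual V)) [ν.IsHaarMeasure]
    -- the action of `Q` on `V` by topological automorphisms, and its moduli
    (mod : Q → ℝ) (hmodpos : ∀ q, 0 < mod q)
    (hmodmul : ∀ q q' : Q, mod (q * q') = mod q * mod q')
    -- the dual orbit assumptions
    (φ : Q → PontryaginDual V) (hφmeas : Measurable φ)
    (hν : (μQ.withDensity fun q => ENNReal.ofReal (mod q)⁻¹).map φ = ν)
    -- the additional continuity assumption on the pairing
    (hpair : Continuous fun p : Q × V => ((φ p.1 p.2 : ℂ)))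
    -- the two continuous compactly supported functions
    (f₁ f₂ : Q × V → ℂ) (hf₁c : Continuous f₁) (hf₁s : HasCompactSupport f₁)
    (hf₂c : Continuous f₂) (hf₂s : HasCompactSupport f₂) :
    Continuous (twistedProd μQ μV φ mod f₁ f₂) ∧
      HasCompactSupport (twistedProd μQ μV φ mod f₁ f₂) := by
  have hφ : Continuous φ := ContinuousMonoidHom.continuous_of_continuous_uncurry φ <|
    (⟨rfl⟩ : Topology.IsInducing ((↑) : Circle → ℂ)).continuous_iff.mpr hpair
  set d : Q → ℝ≥0∞ := fun q => ENNReal.ofReal (mod q)⁻¹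
  have hd_mul (q q' : Q) : d (q * q') = d q * d q' := by
    simp only [d, hmodmul, mul_inv, ENNReal.ofReal_mul (inv_nonneg.2 (hmodpos q).le)]
  have : IsFiniteMeasureOnCompacts ((μQ.withDensity d).map φ) := hν ▸ inferInstance
  have := isFiniteMeasureOnCompacts_of_map (μ := μQ.withDensity d) hφ hφmeas.aemeasurable
  have hd : Measurable d := measurable_of_withDensity_of_map_mul μQ hd_mul
    (fun _ => ENNReal.ofReal_ne_top) fun h => NeZero.ne ν (by rw [← hν, h, Measure.map_zero])
  have := isLocallyFiniteMeasure_of_isFiniteMeasureOnCompacts (μ := μQ.withDensity d)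
  have hmod_eq : (fun q => (mod q)⁻¹) = fun q => (d q).toReal :=
    funext fun q => (ENNReal.toReal_ofReal (inv_nonneg.2 (hmodpos q).le)).symm
  have hmod : LocallyIntegrable (fun q => (mod q)⁻¹) μQ :=
    hmod_eq ▸ locallyIntegrable_toReal_of_withDensity hd.aemeasurable
  exact ⟨continuous_twistedProd μQ μV hpair hmod hf₁c hf₁s hf₂c hf₂s,
    hasCompactSupport_twistedProd μQ μV φ mod hf₁s hf₂s⟩

/-- In the dual orbit setup, if moreover the pairing
`(q,w) ↦ φ(q)(w)` is continuous, then the continuous compactly supported functions on `Q × V`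
are closed under the twisted product: for continuous compactly supported `f₁, f₂ : Q × V → ℂ`,
the function `f₃ = f₁ ⋆ f₂` is again continuous and compactly supported. -/
theorem twistedProd_continuous_compactly_supported
    (Q : Type*) [Group Q] [TopologicalSpace Q] [IsTopologicalGroup Q] [LocallyCompactSpace Q]
    [SecondCountableTopology Q] [MeasurableSpace Q] [BorelSpace Q]
    (μQ : Measure Q) [μQ.IsHaarMeasure]
    (V : Type*) [CommGroup V] [TopologicalSpace V] [IsTopologicalGroup V]
    [LocallyCompactSpace V] [SecondCountableTopology V] [MeasurableSpace V] [BorelSpace V]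
    (μV : Measure V) [μV.IsHaarMeasure]
    [MeasurableSpace (PontryaginDual V)] [BorelSpace (PontryaginDual V)]
    (ν : Measure (PontryaginDual V)) [ν.IsHaarMeasure]
    -- the action of `Q` on `V` by topological automorphisms, and its moduli
    (ρ : Q →* MulAut V) (hρcont : ∀ q : Q, Continuous (ρ q))
    (mod : Q → ℝ) (hmodpos : ∀ q, 0 < mod q)
    (hmodmul : ∀ q q' : Q, mod (q * q') = mod q * mod q')
    (hscale : ∀ q : Q, μV.map (ρ q) = (ENNReal.ofReal (mod q))⁻¹ • μV)
    -- the dual orbit assumptions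
    (ξ₀ : PontryaginDual V) (φ : Q → PontryaginDual V)
    (hφdef : ∀ (q : Q) (v : V), (φ q) v = ξ₀ ((ρ q)⁻¹ v))
    (hφinj : Function.Injective φ) (hφmeas : Measurable φ)
    (hφconull : ν (Set.range φ)ᶜ = 0)
    (hν : (μQ.withDensity fun q => ENNReal.ofReal (mod q)⁻¹).map φ = ν)
    -- the additional continuity assumption on the pairing
    (hpair : Continuous fun p : Q × V => ((φ p.1 p.2 : ℂ)))
    -- the two continuous compactly supported functions
    (f₁ f₂ : Q × V → ℂ) (hf₁c : Continuous f₁) (hf₁s : HasCompactSupport f₁)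
    (hf₂c : Continuous f₂) (hf₂s : HasCompactSupport f₂) :
    Continuous (twistedProd μQ μV φ mod f₁ f₂) ∧
      HasCompactSupport (twistedProd μQ μV φ mod f₁ f₂) :=
  twistedProd_continuous_compactly_supported_general Q μQ V μV ν mod hmodpos hmodmul φ hφmeas hν
    hpair f₁ f₂ hf₁c hf₁s hf₂c hf₂s
end

section
/- Assume the dual orbit setup. For bounded Borel functions F, F' : Q × V̂ → ℂ, define their twisted convolution (F ♦ F')(q,ξ) := ∫_{V̂} F(q,ξ') · F'(g(φ(q) − ξ'), ξ − ξ') dν(ξ'). Suppose F₁, F₂, F₃ : Q × V̂ → ℂ are bounded Borel functions such that each Fᵢ vanishes outside Kᵢ × Cᵢ for some compact Kᵢ ⊆ Q and some Borel set Cᵢ ⊆ V̂ of finite ν-measure. Then all the integrals involved converge absolutely and the twisted convolution is associative: ((F₁ ♦ F₂) ♦ F₃)(q,ξ) = (F₁ ♦ (F₂ ♦ F₃))(q,ξ) for every (q,ξ) ∈ Q × V̂. (This is the Fourier-transformed form of the associativity of the Kohn–Nirenberg star product on G = Q ⋉ V.) -/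
/-!
Both sides of the associativity identity are iterated integrals of the same bounded kernel
`F₁(q, η) F₂(g(φ q / η), ξ' / η) F₃(g(φ q / ξ'), ξ / ξ')`, supported in a product of two sets of
finite measure, so Fubini's theorem applies. For the right-hand side one substitutes `ξ' ↦ ξ' / η`
in the inner integral, using `g (φ q / η) = p` with `φ p = φ q / η`; such a `p` exists for a.e. `η`
because the range of `φ` is conull and `ν` is invariant under `η ↦ φ q / η`.

The measure-theoretic input is that `ν`, a pushforward of a measure with density with respect to
the σ-finite `μQ`, is s-finite. Hence `V̂` is σ-compact: its cosets modulo an open σ-compact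
subgroup are disjoint open sets of positive measure. Since characters are determined by their
values on a dense sequence of `V`, `V̂` is then second countable, so that the Borel σ-algebra of
`V̂ × V̂` is the product σ-algebra.
-/

open MeasureTheory
open scoped ENNReal

/-- The twisted convolution of bounded Borel functions on `Q × V̂`:
`(F ♦ F')(q,ξ) = ∫_{V̂} F(q,ξ') · F'(g(φ(q) − ξ'), ξ − ξ') dν(ξ')`
(the dual group `V̂` is written multiplicatively, so differences become quotients). -/
noncomputable def twistedConv {Q V : Type*} [CommGroup V] [TopologicalSpace V]
    [MeasurableSpace (PontryaginDual V)]
    (ν : Measure (PontryaginDual V)) (φ : Q → PontryaginDual V) (g : PontryaginDual V → Q)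
    (F F' : Q × PontryaginDual V → ℂ) : Q × PontryaginDual V → ℂ :=
  fun x =>
    ∫ ξ' : PontryaginDual V, F (x.1, ξ') * F' (g (φ x.1 / ξ'), x.2 / ξ') ∂ν

open Set Topology
open scoped Pointwise

theorem Subgroup.closure_subset_iUnion_pow {G : Type*} [Group G] (L : Set G) :
    (Subgroup.closure L : Set G) ⊆ ⋃ n : ℕ, (L ∪ L⁻¹) ^ n := by
  intro x hx
  induction hx using Subgroup.closure_induction'' with
  | mem x hx => exact mem_iUnion_of_mem 1 (by simp [hx])
  | inv_mem x hx => exact mem_iUnion_of_mem 1 (by simp [hx])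
  | one => exact mem_iUnion_of_mem 0 (by simp)
  | mul x y _ _ hx hy =>
    obtain ⟨m, hx⟩ := mem_iUnion.1 hx
    obtain ⟨n, hy⟩ := mem_iUnion.1 hy
    exact mem_iUnion_of_mem (m + n) (pow_add (L ∪ L⁻¹) m n ▸ mul_mem_mul hx hy)

theorem IsCompact.pow {G : Type*} [Monoid G] [TopologicalSpace G] [ContinuousMul G] {K : Set G}
    (hK : IsCompact K) (n : ℕ) : IsCompact (K ^ n) := by
  induction n with
  | zero => simp
  | succ n ih => rw [pow_succ]; exact ih.mul hK

theorem exists_isOpen_isSigmaCompact_subgroup (G : Type*) [Group G] [TopologicalSpace G]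
    [IsTopologicalGroup G] [LocallyCompactSpace G] :
    ∃ S : Subgroup G, IsOpen (S : Set G) ∧ IsSigmaCompact (S : Set G) := by
  obtain ⟨L, hLc, hL1⟩ := exists_compact_mem_nhds (1 : G)
  have hS : IsOpen (Subgroup.closure L : Set G) :=
    Subgroup.isOpen_of_mem_nhds _ (Filter.mem_of_superset hL1 Subgroup.subset_closure)
  refine ⟨_, hS, IsSigmaCompact.of_isClosed_subset ?_ (Subgroup.isClosed_of_isOpen _ hS)
    (Subgroup.closure_subset_iUnion_pow L)⟩
  exact isSigmaCompact_iUnion_of_isCompact _ fun n => (hLc.union hLc.inv).pow n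

theorem sigmaCompactSpace_of_sFinite {G : Type*} [Group G] [TopologicalSpace G]
    [IsTopologicalGroup G] [LocallyCompactSpace G] [MeasurableSpace G] [BorelSpace G]
    (μ : Measure G) [SFinite μ] [μ.IsOpenPosMeasure] : SigmaCompactSpace G := by
  obtain ⟨S, hSo, hSσ⟩ := exists_isOpen_isSigmaCompact_subgroup G
  have : DiscreteTopology (G ⧸ S) := QuotientGroup.discreteTopology hSo
  have hcoset : ∀ c : G ⧸ S, IsOpen (QuotientGroup.mk ⁻¹' {c} : Set G) := fun c =>
    (isOpen_discrete {c}).preimage QuotientGroup.continuous_mk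
  have : Countable (G ⧸ S) := by
    have hpos : ∀ c : G ⧸ S, 0 < μ (QuotientGroup.mk ⁻¹' {c}) := fun c =>
      (hcoset c).measure_pos μ
        (QuotientGroup.mk_surjective.nonempty_preimage.2 (singleton_nonempty c))
    have := Measure.countable_meas_pos_of_disjoint_iUnion (μ := μ)
      (fun c => (hcoset c).measurableSet)
      (fun a b hab => disjoint_singleton.2 hab |>.preimage _)
    simpa [hpos, countable_univ_iff] using this
  have hcover : ⋃ c : G ⧸ S, (c.out * ·) '' (S : Set G) = univ := by
    refine eq_univ_of_forall fun x => mem_iUnion.2 ⟨(x : G ⧸ S), ?_⟩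
    exact ⟨_, QuotientGroup.eq.1 (QuotientGroup.out_eq' _), mul_inv_cancel_left _ x⟩
  exact isSigmaCompact_univ_iff.1 <|
    hcover ▸ isSigmaCompact_iUnion _ fun c => hSσ.image (continuous_const_mul _)

theorem SecondCountableTopology.of_continuous_injective {X Y : Type*} [TopologicalSpace X]
    [TopologicalSpace Y] [LocallyCompactSpace X] [SigmaCompactSpace X] [T2Space Y]
    [SecondCountableTopology Y] {f : X → Y} (hf : Continuous f) (hinj : Function.Injective f) :
    SecondCountableTopology X := by
  have hK : ∀ s : Set X, IsCompact s → SecondCountableTopology s := fun s hs => by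
    have : CompactSpace s := isCompact_iff_compactSpace.mp hs
    exact ((hf.comp continuous_subtype_val).isClosedEmbedding
      (hinj.comp Subtype.val_injective)).isEmbedding.secondCountableTopology
  let K := CompactExhaustion.choice X
  have (n : ℕ) : SecondCountableTopology (interior (K (n + 1))) := by
    have := hK _ (K.isCompact (n + 1))
    exact (IsEmbedding.inclusion interior_subset).secondCountableTopology
  refine TopologicalSpace.secondCountableTopology_of_countable_cover
    (U := fun n => interior (K (n + 1))) (fun _ => isOpen_interior) ?_
  exact eq_univ_of_forall fun x => mem_iUnion_of_mem _ (K.subset_interior_succ _ (K.mem_find x))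

theorem PontryaginDual.secondCountableTopology (V : Type*) [CommGroup V] [TopologicalSpace V]
    [TopologicalSpace.SeparableSpace V] [LocallyCompactSpace (PontryaginDual V)]
    [SigmaCompactSpace (PontryaginDual V)] : SecondCountableTopology (PontryaginDual V) := by
  have : Nonempty V := ⟨1⟩
  let u := TopologicalSpace.denseSeq V
  refine SecondCountableTopology.of_continuous_injective
    (f := fun χ : PontryaginDual V => fun n => χ (u n))
    (continuous_pi fun n => (continuous_eval_const (u n) :
      Continuous fun χ : V →ₜ* Circle => χ (u n))) fun χ χ' h => ?_
  exact DFunLike.coe_injective <| (map_continuous χ).ext_on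
    (TopologicalSpace.denseRange_denseSeq V) (map_continuous χ') (forall_mem_range.2 (congrFun h))

section Integrable

variable {α E : Type*} [MeasurableSpace α] {μ : Measure α} [NormedAddCommGroup E] {f : α → E}
  {s : Set α} {M : ℝ}

theorem integrable_of_norm_le_of_forall_notMem_eq_zero (hs : μ s ≠ ∞)
    (hf : AEStronglyMeasurable f μ) (hM : ∀ x, ‖f x‖ ≤ M) (h0 : ∀ x, x ∉ s → f x = 0) :
    Integrable f μ :=
  (Measure.integrableOn_of_bounded hs hf (ae_of_all _ hM)).integrable_of_forall_notMem_eq_zero h0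

theorem norm_integral_le_of_norm_le_of_forall_notMem_eq_zero [NormedSpace ℝ E] (hs : μ s ≠ ∞)
    (hM : ∀ x, ‖f x‖ ≤ M) (h0 : ∀ x, x ∉ s → f x = 0) : ‖∫ x, f x ∂μ‖ ≤ M * μ.real s := by
  rw [← setIntegral_eq_integral_of_forall_compl_eq_zero h0]
  exact norm_setIntegral_le_of_norm_le_const hs.lt_top fun x _ => hM x

end Integrable

theorem measure_preimage_div_left {G : Type*} [Group G] [MeasurableSpace G] [MeasurableMul G]
    [MeasurableInv G] (μ : Measure G) [μ.IsMulLeftInvariant] [μ.IsInvInvariant] (g : G)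
    (s : Set G) : μ ((g / ·) ⁻¹' s) = μ s :=
  (Measure.measurePreserving_div_left μ g).measure_preimage_equiv
    (f := MeasurableEquiv.divLeft g) s

section TwistedConv

variable {Q V : Type*} [CommGroup V] [TopologicalSpace V]
  [MeasurableSpace (PontryaginDual V)] {ν : Measure (PontryaginDual V)}
  {φ : Q → PontryaginDual V} {g : PontryaginDual V → Q} {F F' : Q × PontryaginDual V → ℂ}
  {B B' : ℝ} {C : Set (PontryaginDual V)}

theorem measurable_twistedConv [MeasurableSpace Q] [MeasurableDiv₂ (PontryaginDual V)]
    [SFinite ν]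
    (hF : Measurable F) (hF' : Measurable F') (hφ : Measurable φ) (hg : Measurable g) :
    Measurable (twistedConv ν φ g F F') := by
  have hkernel : Measurable fun p : (Q × PontryaginDual V) × PontryaginDual V =>
      F (p.1.1, p.2) * F' (g (φ p.1.1 / p.2), p.1.2 / p.2) := by
    fun_prop
  exact hkernel.stronglyMeasurable.integral_prod_right'.measurable

theorem norm_twistedConv_le (hFB : ∀ x, ‖F x‖ ≤ B) (hF'B : ∀ x, ‖F' x‖ ≤ B') (hC : ν C ≠ ∞)
    (hFC : ∀ q ξ, ξ ∉ C → F (q, ξ) = 0) (x : Q × PontryaginDual V) :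
    ‖twistedConv ν φ g F F' x‖ ≤ B * B' * ν.real C :=
  norm_integral_le_of_norm_le_of_forall_notMem_eq_zero hC
    (fun _ => norm_mul_le_of_le (hFB _) (hF'B _)) fun ξ' hξ' => by rw [hFC _ _ hξ', zero_mul]

theorem integrable_twistedConv_integrand_of_left [MeasurableSpace Q]
    [MeasurableDiv (PontryaginDual V)]
    (hF : Measurable F) (hF' : Measurable F') (hg : Measurable g) (hFB : ∀ x, ‖F x‖ ≤ B)
    (hF'B : ∀ x, ‖F' x‖ ≤ B') (hC : ν C ≠ ∞) (hFC : ∀ q ξ, ξ ∉ C → F (q, ξ) = 0)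
    (x : Q × PontryaginDual V) :
    Integrable (fun ξ' => F (x.1, ξ') * F' (g (φ x.1 / ξ'), x.2 / ξ')) ν :=
  integrable_of_norm_le_of_forall_notMem_eq_zero hC
    (by fun_prop : Measurable _).aestronglyMeasurable
    (fun _ => norm_mul_le_of_le (hFB _) (hF'B _)) fun ξ' hξ' => by rw [hFC _ _ hξ', zero_mul]

theorem integrable_twistedConv_integrand_of_right [MeasurableSpace Q]
    [MeasurableMul (PontryaginDual V)] [MeasurableInv (PontryaginDual V)]
    [ν.IsMulLeftInvariant] [ν.IsInvInvariant]
    (hF : Measurable F) (hF' : Measurable F') (hg : Measurable g) (hFB : ∀ x, ‖F x‖ ≤ B)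
    (hF'B : ∀ x, ‖F' x‖ ≤ B') (hC : ν C ≠ ∞) (hF'C : ∀ q ξ, ξ ∉ C → F' (q, ξ) = 0)
    (x : Q × PontryaginDual V) :
    Integrable (fun ξ' => F (x.1, ξ') * F' (g (φ x.1 / ξ'), x.2 / ξ')) ν :=
  integrable_of_norm_le_of_forall_notMem_eq_zero (s := (x.2 / ·) ⁻¹' C)
    (by rwa [measure_preimage_div_left]) (by fun_prop : Measurable _).aestronglyMeasurable
    (fun _ => norm_mul_le_of_le (hFB _) (hF'B _)) fun ξ' hξ' => by rw [hF'C _ _ hξ', mul_zero]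

theorem twistedConv_apply_eq_integral_div [MeasurableMul (PontryaginDual V)]
    [ν.IsMulLeftInvariant] (p : Q) (ξ η : PontryaginDual V) :
    twistedConv ν φ g F F' (p, ξ) =
      ∫ ξ', F (p, ξ' / η) * F' (g (φ p * η / ξ'), ξ * η / ξ') ∂ν := by
  rw [twistedConv, ← integral_div_right_eq_self _ η]
  simp only [div_div_eq_mul_div]

theorem twistedConv_twistedConv_left {F₁ F₂ F₃ : Q × PontryaginDual V → ℂ} (q : Q)
    (ξ : PontryaginDual V) :
    twistedConv ν φ g (twistedConv ν φ g F₁ F₂) F₃ (q, ξ) =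
      ∫ ξ', ∫ η, F₁ (q, η) * F₂ (g (φ q / η), ξ' / η) * F₃ (g (φ q / ξ'), ξ / ξ') ∂ν ∂ν := by
  simp only [twistedConv, integral_mul_const]

theorem twistedConv_twistedConv_right [MeasurableMul (PontryaginDual V)]
    [MeasurableInv (PontryaginDual V)] [ν.IsMulLeftInvariant] [ν.IsInvInvariant]
    {F₁ F₂ F₃ : Q × PontryaginDual V → ℂ} (hrange : ν (range φ)ᶜ = 0)
    (hgφ : ∀ q, g (φ q) = q) (q : Q) (ξ : PontryaginDual V) :
    twistedConv ν φ g F₁ (twistedConv ν φ g F₂ F₃) (q, ξ) =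
      ∫ η, ∫ ξ', F₁ (q, η) * F₂ (g (φ q / η), ξ' / η) * F₃ (g (φ q / ξ'), ξ / ξ') ∂ν ∂ν := by
  have hae : ∀ᵐ η ∂ν, φ q / η ∈ range φ :=
    ae_iff.2 (measure_preimage_div_left ν (φ q) (range φ)ᶜ ▸ hrange)
  refine integral_congr_ae (hae.mono fun η ⟨p, hp⟩ => ?_)
  have hpη : φ p * η = φ q := by rw [hp, div_mul_cancel]
  simp only [← hp, hgφ, twistedConv_apply_eq_integral_div p (ξ / η) η, hpη, div_mul_cancel,
    ← integral_const_mul, mul_assoc]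

theorem integrable_twistedConv_triple_kernel [MeasurableSpace Q]
    [MeasurableMul₂ (PontryaginDual V)] [MeasurableInv (PontryaginDual V)] [SFinite ν]
    [ν.IsMulLeftInvariant] [ν.IsInvInvariant] {F₁ F₂ F₃ : Q × PontryaginDual V → ℂ}
    {B₁ B₂ B₃ : ℝ} {C₁ C₃ : Set (PontryaginDual V)}
    (hF₁ : Measurable F₁) (hF₂ : Measurable F₂) (hF₃ : Measurable F₃) (hg : Measurable g)
    (hF₁B : ∀ x, ‖F₁ x‖ ≤ B₁) (hF₂B : ∀ x, ‖F₂ x‖ ≤ B₂) (hF₃B : ∀ x, ‖F₃ x‖ ≤ B₃)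
    (hC₁ : ν C₁ ≠ ∞) (hC₃ : ν C₃ ≠ ∞) (hF₁C₁ : ∀ q ξ, ξ ∉ C₁ → F₁ (q, ξ) = 0)
    (hF₃C₃ : ∀ q ξ, ξ ∉ C₃ → F₃ (q, ξ) = 0) (q : Q) (ξ : PontryaginDual V) :
    Integrable (Function.uncurry fun ξ' η =>
      F₁ (q, η) * F₂ (g (φ q / η), ξ' / η) * F₃ (g (φ q / ξ'), ξ / ξ')) (ν.prod ν) := by
  refine integrable_of_norm_le_of_forall_notMem_eq_zero (s := ((ξ / ·) ⁻¹' C₃) ×ˢ C₁)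
    (by rw [Measure.prod_prod, measure_preimage_div_left]; exact ENNReal.mul_ne_top hC₃ hC₁)
    (by fun_prop : Measurable _).aestronglyMeasurable
    (fun _ => norm_mul_le_of_le (norm_mul_le_of_le (hF₁B _) (hF₂B _)) (hF₃B _)) ?_
  rintro ⟨ξ', η⟩ h
  rcases not_and_or.1 (mem_prod.not.1 h) with h | h
  · simp only [Function.uncurry_apply_pair, hF₃C₃ _ _ h, mul_zero]
  · simp only [Function.uncurry_apply_pair, hF₁C₁ _ _ h, zero_mul]

end TwistedConv

theorem twistedConv_assoc_general
    (Q : Type*) [Group Q] [TopologicalSpace Q] [LocallyCompactSpace Q]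
    [SecondCountableTopology Q] [MeasurableSpace Q]
    (μQ : Measure Q) [μQ.IsHaarMeasure]
    (V : Type*) [CommGroup V] [TopologicalSpace V] [IsTopologicalGroup V]
    [LocallyCompactSpace V] [SecondCountableTopology V]
    [MeasurableSpace (PontryaginDual V)] [BorelSpace (PontryaginDual V)]
    (ν : Measure (PontryaginDual V)) [ν.IsHaarMeasure]
    -- the action of `Q` on `V` by topological automorphisms, and its moduli
    (mod : Q → ℝ)
    -- the dual orbit assumptions
    (φ : Q → PontryaginDual V) (hφmeas : Measurable φ)
    (hφconull : ν (Set.range φ)ᶜ = 0)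
    (hν : (μQ.withDensity fun q => ENNReal.ofReal (mod q)⁻¹).map φ = ν)
    (g : PontryaginDual V → Q) (hg : Measurable g) (hgφ : ∀ q : Q, g (φ q) = q)
    -- the three bounded Borel functions with supports of finite measure
    (F₁ F₂ F₃ : Q × PontryaginDual V → ℂ)
    (hF₁m : Measurable F₁) (hF₂m : Measurable F₂) (hF₃m : Measurable F₃)
    (hF₁b : ∃ C : ℝ, ∀ x, ‖F₁ x‖ ≤ C) (hF₂b : ∃ C : ℝ, ∀ x, ‖F₂ x‖ ≤ C)
    (hF₃b : ∃ C : ℝ, ∀ x, ‖F₃ x‖ ≤ C)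
    (K₁ K₂ K₃ : Set Q)
    (C₁ C₂ C₃ : Set (PontryaginDual V))
    (hC₁fin : ν C₁ ≠ ∞) (hC₂fin : ν C₂ ≠ ∞) (hC₃fin : ν C₃ ≠ ∞)
    (hF₁supp : ∀ x, x ∉ K₁ ×ˢ C₁ → F₁ x = 0)
    (hF₂supp : ∀ x, x ∉ K₂ ×ˢ C₂ → F₂ x = 0)
    (hF₃supp : ∀ x, x ∉ K₃ ×ˢ C₃ → F₃ x = 0) :
    (∀ x : Q × PontryaginDual V,
        Integrable (fun ξ' => F₁ (x.1, ξ') * F₂ (g (φ x.1 / ξ'), x.2 / ξ')) ν) ∧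
    (∀ x : Q × PontryaginDual V,
        Integrable (fun ξ' => F₂ (x.1, ξ') * F₃ (g (φ x.1 / ξ'), x.2 / ξ')) ν) ∧
    (∀ x : Q × PontryaginDual V,
        Integrable
          (fun ξ' => twistedConv ν φ g F₁ F₂ (x.1, ξ') * F₃ (g (φ x.1 / ξ'), x.2 / ξ')) ν) ∧
    (∀ x : Q × PontryaginDual V,
        Integrable
          (fun ξ' => F₁ (x.1, ξ') * twistedConv ν φ g F₂ F₃ (g (φ x.1 / ξ'), x.2 / ξ')) ν) ∧
    ∀ x : Q × PontryaginDual V,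
      twistedConv ν φ g (twistedConv ν φ g F₁ F₂) F₃ x =
        twistedConv ν φ g F₁ (twistedConv ν φ g F₂ F₃) x := by
  obtain ⟨B₁, hB₁⟩ := hF₁b
  obtain ⟨B₂, hB₂⟩ := hF₂b
  obtain ⟨B₃, hB₃⟩ := hF₃b
  have hF₁C : ∀ q ξ, ξ ∉ C₁ → F₁ (q, ξ) = 0 := fun q ξ hξ => hF₁supp _ fun h => hξ h.2
  have hF₂C : ∀ q ξ, ξ ∉ C₂ → F₂ (q, ξ) = 0 := fun q ξ hξ => hF₂supp _ fun h => hξ h.2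
  have hF₃C : ∀ q ξ, ξ ∉ C₃ → F₃ (q, ξ) = 0 := fun q ξ hξ => hF₃supp _ fun h => hξ h.2
  have : SFinite ν := hν ▸ inferInstance
  have := sigmaCompactSpace_of_sFinite ν
  have := PontryaginDual.secondCountableTopology V
  refine ⟨integrable_twistedConv_integrand_of_left hF₁m hF₂m hg hB₁ hB₂ hC₁fin hF₁C,
    integrable_twistedConv_integrand_of_left hF₂m hF₃m hg hB₂ hB₃ hC₂fin hF₂C,
    integrable_twistedConv_integrand_of_right (measurable_twistedConv hF₁m hF₂m hφmeas hg) hF₃m hg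
      (norm_twistedConv_le hB₁ hB₂ hC₁fin hF₁C) hB₃ hC₃fin hF₃C,
    integrable_twistedConv_integrand_of_left hF₁m (measurable_twistedConv hF₂m hF₃m hφmeas hg) hg
      hB₁ (norm_twistedConv_le hB₂ hB₃ hC₂fin hF₂C) hC₁fin hF₁C,
    fun ⟨q, ξ⟩ => ?_⟩
  rw [twistedConv_twistedConv_left, integral_integral_swap (integrable_twistedConv_triple_kernel
    hF₁m hF₂m hF₃m hg hB₁ hB₂ hB₃ hC₁fin hC₃fin hF₁C hF₃C q ξ),
    twistedConv_twistedConv_right hφconull hgφ]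

/-- In the dual orbit setup, for bounded Borel functions
`F₁, F₂, F₃ : Q × V̂ → ℂ` each vanishing outside `Kᵢ × Cᵢ` with `Kᵢ ⊆ Q` compact and `Cᵢ ⊆ V̂`
Borel of finite measure, all the integrals defining the twisted convolutions converge absolutely
and the twisted convolution is associative: `(F₁ ♦ F₂) ♦ F₃ = F₁ ♦ (F₂ ♦ F₃)` pointwise.
This is the Fourier-transformed form of the associativity of the Kohn–Nirenberg star product
on `G = Q ⋉ V`. -/
theorem twistedConv_assoc
    (Q : Type*) [Group Q] [TopologicalSpace Q] [IsTopologicalGroup Q] [LocallyCompactSpace Q]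
    [SecondCountableTopology Q] [MeasurableSpace Q] [BorelSpace Q]
    (μQ : Measure Q) [μQ.IsHaarMeasure]
    (V : Type*) [CommGroup V] [TopologicalSpace V] [IsTopologicalGroup V]
    [LocallyCompactSpace V] [SecondCountableTopology V] [MeasurableSpace V] [BorelSpace V]
    (μV : Measure V) [μV.IsHaarMeasure]
    [MeasurableSpace (PontryaginDual V)] [BorelSpace (PontryaginDual V)]
    (ν : Measure (PontryaginDual V)) [ν.IsHaarMeasure]
    -- the action of `Q` on `V` by topological automorphisms, and its moduli
    (ρ : Q →* MulAut V) (hρcont : ∀ q : Q, Continuous (ρ q))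
    (mod : Q → ℝ) (hmodpos : ∀ q, 0 < mod q)
    (hmodmul : ∀ q q' : Q, mod (q * q') = mod q * mod q')
    (hscale : ∀ q : Q, μV.map (ρ q) = (ENNReal.ofReal (mod q))⁻¹ • μV)
    -- the dual orbit assumptions
    (ξ₀ : PontryaginDual V) (φ : Q → PontryaginDual V)
    (hφdef : ∀ (q : Q) (v : V), (φ q) v = ξ₀ ((ρ q)⁻¹ v))
    (hφinj : Function.Injective φ) (hφmeas : Measurable φ)
    (hφconull : ν (Set.range φ)ᶜ = 0)
    (hν : (μQ.withDensity fun q => ENNReal.ofReal (mod q)⁻¹).map φ = ν)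
    (g : PontryaginDual V → Q) (hg : Measurable g) (hgφ : ∀ q : Q, g (φ q) = q)
    -- the three bounded Borel functions with supports of finite measure
    (F₁ F₂ F₃ : Q × PontryaginDual V → ℂ)
    (hF₁m : Measurable F₁) (hF₂m : Measurable F₂) (hF₃m : Measurable F₃)
    (hF₁b : ∃ C : ℝ, ∀ x, ‖F₁ x‖ ≤ C) (hF₂b : ∃ C : ℝ, ∀ x, ‖F₂ x‖ ≤ C)
    (hF₃b : ∃ C : ℝ, ∀ x, ‖F₃ x‖ ≤ C)
    (K₁ K₂ K₃ : Set Q) (hK₁ : IsCompact K₁) (hK₂ : IsCompact K₂) (hK₃ : IsCompact K₃)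
    (C₁ C₂ C₃ : Set (PontryaginDual V))
    (hC₁ : MeasurableSet C₁) (hC₂ : MeasurableSet C₂) (hC₃ : MeasurableSet C₃)
    (hC₁fin : ν C₁ ≠ ∞) (hC₂fin : ν C₂ ≠ ∞) (hC₃fin : ν C₃ ≠ ∞)
    (hF₁supp : ∀ x, x ∉ K₁ ×ˢ C₁ → F₁ x = 0)
    (hF₂supp : ∀ x, x ∉ K₂ ×ˢ C₂ → F₂ x = 0)
    (hF₃supp : ∀ x, x ∉ K₃ ×ˢ C₃ → F₃ x = 0) :
    (∀ x : Q × PontryaginDual V,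
        Integrable (fun ξ' => F₁ (x.1, ξ') * F₂ (g (φ x.1 / ξ'), x.2 / ξ')) ν) ∧
    (∀ x : Q × PontryaginDual V,
        Integrable (fun ξ' => F₂ (x.1, ξ') * F₃ (g (φ x.1 / ξ'), x.2 / ξ')) ν) ∧
    (∀ x : Q × PontryaginDual V,
        Integrable
          (fun ξ' => twistedConv ν φ g F₁ F₂ (x.1, ξ') * F₃ (g (φ x.1 / ξ'), x.2 / ξ')) ν) ∧
    (∀ x : Q × PontryaginDual V,
        Integrable
          (fun ξ' => F₁ (x.1, ξ') * twistedConv ν φ g F₂ F₃ (g (φ x.1 / ξ'), x.2 / ξ')) ν) ∧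
    ∀ x : Q × PontryaginDual V,
      twistedConv ν φ g (twistedConv ν φ g F₁ F₂) F₃ x =
        twistedConv ν φ g F₁ (twistedConv ν φ g F₂ F₃) x :=
  twistedConv_assoc_general Q μQ V ν mod φ hφmeas hφconull hν g hg hgφ F₁ F₂ F₃ hF₁m hF₂m hF₃m hF₁b
    hF₂b hF₃b K₁ K₂ K₃ C₁ C₂ C₃ hC₁fin hC₂fin hC₃fin hF₁supp hF₂supp hF₃supp
end

section
/- Assume the dual orbit setup (with φ injective and its range conull). Consider the semidirect product group G' = Q ⋉ V̂ with underlying set Q × V̂ and multiplication (q,ξ)(q',ξ') = (qq', ξ + q^♭ξ'). Then: (i) H₁ := {(q, 0) : q ∈ Q} and H₂ := {(q, ξ₀ − q^♭ξ₀) : q ∈ Q} are subgroups of G'; (ii) H₁ ∩ H₂ = {(e, 0)}; (iii) the product set H₁H₂ equals {(q,ξ) ∈ Q × V̂ : ξ + q^♭ξ₀ ∈ φ(Q)}, and this set is conull with respect to the measure μ_Q ⊗ ν. (Thus (Q, ξ₀Qξ₀⁻¹) is a matched pair of subgroups of Q ⋉ V̂.) -/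
/-!
`H₁` is the copy of `Q` in `V̂ ⋊ Q` and `H₂` is its conjugate by `ξ₀`. An element of `H₁` lies in
`H₂` exactly when it fixes `ξ₀`, so injectivity of the orbit map makes the intersection trivial;
writing out `inr q * inl ξ₀ * inr r * inl ξ₀⁻¹` shows that `(ξ, s) ∈ H₁H₂` iff `ξ · s^♭ξ₀` lies in
the orbit of `ξ₀`. The shear `(q, ξ) ↦ (q, ξ · q^♭ξ₀)` preserves `μ_Q ⊗ ν` because `ν` is
translation invariant, so it pulls the conull set `Q × orbit` back to a conull set.
-/

open MeasureTheory Pointwise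

namespace SemidirectProduct

variable {N G : Type*} [Group N] [Group G] {φ : G →* MulAut N}

theorem mem_range_inr {x : N ⋊[φ] G} : x ∈ (inr : G →* N ⋊[φ] G).range ↔ x.left = 1 :=
  ⟨by rintro ⟨g, rfl⟩; rfl, fun h => ⟨x.right, by ext <;> simp [h]⟩⟩

theorem conj_inl_inr (n : N) (g : G) :
    MulAut.conj (inl n) (inr g : N ⋊[φ] G) = ⟨n * (φ g n)⁻¹, g⟩ := by
  ext <;> simp [MulAut.conj_apply]

theorem mem_conj_inl_smul_range_inr {n : N} {x : N ⋊[φ] G} :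
    x ∈ MulAut.conj (inl n : N ⋊[φ] G) • (inr : G →* N ⋊[φ] G).range ↔
      x.left = n * (φ x.right n)⁻¹ := by
  simp only [Subgroup.mem_smul_pointwise_iff_exists, MonoidHom.mem_range, MulAut.smul_def]
  constructor
  · rintro ⟨_, ⟨g, rfl⟩, rfl⟩
    rw [conj_inl_inr]
  · intro h
    exact ⟨_, ⟨x.right, rfl⟩, by rw [conj_inl_inr, ← h]⟩

theorem range_inr_inf_conj_inl_smul_range_inr_eq_bot {n : N}
    (hn : Function.Injective fun g => φ g n) :
    (inr : G →* N ⋊[φ] G).range ⊓ MulAut.conj (inl n : N ⋊[φ] G) • (inr : G →* N ⋊[φ] G).range =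
      ⊥ := by
  refine (Subgroup.eq_bot_iff_forall _).2 fun x hx => ?_
  obtain ⟨h₁, h₂⟩ := Subgroup.mem_inf.1 hx
  rw [mem_range_inr] at h₁
  rw [mem_conj_inl_smul_range_inr, h₁, eq_comm, mul_inv_eq_one] at h₂
  have hright : x.right = 1 := hn (by simpa using h₂.symm)
  ext <;> simp [h₁, hright]

theorem coe_range_inr_mul_conj_inl_smul_range_inr (n : N) :
    ((inr : G →* N ⋊[φ] G).range : Set (N ⋊[φ] G)) *
        ((MulAut.conj (inl n : N ⋊[φ] G) • (inr : G →* N ⋊[φ] G).range :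
          Subgroup (N ⋊[φ] G)) : Set (N ⋊[φ] G)) =
      {x | x.left * φ x.right n ∈ Set.range fun g => φ g n} := by
  ext x
  simp only [Set.mem_mul, SetLike.mem_coe, MonoidHom.mem_range, mem_conj_inl_smul_range_inr,
    Set.mem_ofPred_eq, Set.mem_range]
  constructor
  · rintro ⟨_, ⟨g, rfl⟩, y, hy, rfl⟩
    refine ⟨g, ?_⟩
    simp [hy, mul_assoc]
  · rintro ⟨g, hg⟩
    refine ⟨inr g, ⟨g, rfl⟩, ⟨n * (φ (g⁻¹ * x.right) n)⁻¹, g⁻¹ * x.right⟩, rfl, ?_⟩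
    have hx : x.left = φ g n * (φ x.right n)⁻¹ := eq_mul_inv_of_mul_eq hg.symm
    ext
    · rw [mul_left, left_inr, right_inr, one_mul, map_mul, map_inv, ← MulAut.mul_apply,
        ← map_mul, mul_inv_cancel_left, hx]
    · simp

end SemidirectProduct

theorem MeasureTheory.Measure.quasiMeasurePreserving_snd_mul_comp_fst
    {α M : Type*} [MeasurableSpace α] [MeasurableSpace M] [Mul M] [MeasurableMul₂ M]
    {μ : Measure α} {ν : Measure M} [SFinite μ] [SFinite ν] [ν.IsMulRightInvariant]
    {f : α → M} (hf : Measurable f) :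
    Measure.QuasiMeasurePreserving (fun p : α × M => p.2 * f p.1) (μ.prod ν) ν :=
  have hshear : MeasurePreserving (fun p : α × M => (p.1, p.2 * f p.1)) (μ.prod ν) (μ.prod ν) :=
    (MeasurePreserving.id μ).skew_product (measurable_snd.mul (hf.comp measurable_fst))
      (.of_forall fun a => map_mul_right_eq_self ν (f a))
  Measure.quasiMeasurePreserving_snd.comp hshear.quasiMeasurePreserving

theorem matched_pair_of_dual_orbit_general
    (Q : Type*) [Group Q] [TopologicalSpace Q] [LocallyCompactSpace Q]
    [SecondCountableTopology Q] [MeasurableSpace Q]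
    (μQ : Measure Q) [μQ.IsHaarMeasure]
    (V : Type*) [CommGroup V] [TopologicalSpace V] [IsTopologicalGroup V]
    [LocallyCompactSpace V] [SecondCountableTopology V]
    [MeasurableSpace (PontryaginDual V)] [BorelSpace (PontryaginDual V)]
    (ν : Measure (PontryaginDual V)) [ν.IsHaarMeasure]
    -- the action of `Q` on `V` and the induced dual action `δ` on `V̂`
    (δ : Q →* MulAut (PontryaginDual V))
    -- the dual orbit assumptions for `φ q = q^♭ξ₀ = δ q ξ₀`
    (ξ₀ : PontryaginDual V)
    (hφinj : Function.Injective fun q : Q => δ q ξ₀)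
    (hφmeas : Measurable fun q : Q => δ q ξ₀)
    (hφconull : ν (Set.range fun q : Q => δ q ξ₀)ᶜ = 0) :
    (∃ H₁ H₂ : Subgroup (PontryaginDual V ⋊[δ] Q),
      (H₁ : Set (PontryaginDual V ⋊[δ] Q)) = {x | x.left = 1} ∧
      (H₂ : Set (PontryaginDual V ⋊[δ] Q)) = {x | x.left = ξ₀ * (δ x.right ξ₀)⁻¹} ∧
      H₁ ⊓ H₂ = ⊥ ∧
      (H₁ : Set (PontryaginDual V ⋊[δ] Q)) * (H₂ : Set (PontryaginDual V ⋊[δ] Q)) =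
        {x | x.left * δ x.right ξ₀ ∈ Set.range fun q : Q => δ q ξ₀}) ∧
    (μQ.prod ν)
        {p : Q × PontryaginDual V | p.2 * δ p.1 ξ₀ ∈ Set.range fun q : Q => δ q ξ₀}ᶜ = 0 := by
  open SemidirectProduct in
  refine ⟨⟨inr.range, MulAut.conj (inl ξ₀) • inr.range,
    Set.ext fun _ => mem_range_inr, Set.ext fun _ => mem_conj_inl_smul_range_inr,
    range_inr_inf_conj_inl_smul_range_inr_eq_bot hφinj,
    coe_range_inr_mul_conj_inl_smul_range_inr ξ₀⟩, ?_⟩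
  have : SecondCountableTopology (PontryaginDual V) :=
    (ContinuousMonoidHom.isInducing_toContinuousMap V Circle).secondCountableTopology
  exact mem_ae_iff.1 <| (Measure.quasiMeasurePreserving_snd_mul_comp_fst (μ := μQ) hφmeas).ae
    (mem_ae_iff.2 hφconull)

/-- In the dual orbit setup, consider the semidirect product
`G' = Q ⋉ V̂ = V̂ ⋊[δ] Q` (with multiplication `(q,ξ)(q',ξ') = (qq', ξ + q^♭ξ')`, written here
multiplicatively with `δ q = q^♭`). Then `H₁ = {(q,0)}` and `H₂ = {(q, ξ₀ − q^♭ξ₀)}` are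
subgroups of `G'`, `H₁ ∩ H₂` is trivial, the product set `H₁H₂` equals
`{(q,ξ) : ξ + q^♭ξ₀ ∈ φ(Q)}`, and this set is conull for `μ_Q ⊗ ν`. Thus
`(Q, ξ₀Qξ₀⁻¹)` is a matched pair of subgroups of `Q ⋉ V̂`. -/
theorem matched_pair_of_dual_orbit
    (Q : Type*) [Group Q] [TopologicalSpace Q] [IsTopologicalGroup Q] [LocallyCompactSpace Q]
    [SecondCountableTopology Q] [MeasurableSpace Q] [BorelSpace Q]
    (μQ : Measure Q) [μQ.IsHaarMeasure]
    (V : Type*) [CommGroup V] [TopologicalSpace V] [IsTopologicalGroup V]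
    [LocallyCompactSpace V] [SecondCountableTopology V]
    [MeasurableSpace (PontryaginDual V)] [BorelSpace (PontryaginDual V)]
    (ν : Measure (PontryaginDual V)) [ν.IsHaarMeasure]
    -- the action of `Q` on `V` and the induced dual action `δ` on `V̂`
    (ρ : Q →* MulAut V)
    (δ : Q →* MulAut (PontryaginDual V))
    (hδ : ∀ (q : Q) (ξ : PontryaginDual V) (v : V), (δ q ξ) v = ξ ((ρ q)⁻¹ v))
    -- the dual orbit assumptions for `φ q = q^♭ξ₀ = δ q ξ₀`
    (ξ₀ : PontryaginDual V)
    (hφinj : Function.Injective fun q : Q => δ q ξ₀)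
    (hφmeas : Measurable fun q : Q => δ q ξ₀)
    (hφconull : ν (Set.range fun q : Q => δ q ξ₀)ᶜ = 0) :
    (∃ H₁ H₂ : Subgroup (PontryaginDual V ⋊[δ] Q),
      (H₁ : Set (PontryaginDual V ⋊[δ] Q)) = {x | x.left = 1} ∧
      (H₂ : Set (PontryaginDual V ⋊[δ] Q)) = {x | x.left = ξ₀ * (δ x.right ξ₀)⁻¹} ∧
      H₁ ⊓ H₂ = ⊥ ∧
      (H₁ : Set (PontryaginDual V ⋊[δ] Q)) * (H₂ : Set (PontryaginDual V ⋊[δ] Q)) =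
        {x | x.left * δ x.right ξ₀ ∈ Set.range fun q : Q => δ q ξ₀}) ∧
    (μQ.prod ν)
        {p : Q × PontryaginDual V | p.2 * δ p.1 ξ₀ ∈ Set.range fun q : Q => δ q ξ₀}ᶜ = 0 :=
  matched_pair_of_dual_orbit_general Q μQ V ν δ ξ₀ hφinj hφmeas hφconull
end

section
/- Let G = ℝ* ⋉ ℝ be the ax+b group, i.e., the set {(q,v) : q ∈ ℝ∖{0}, v ∈ ℝ} with multiplication (q,v)(q',v') = (qq', v + qv'). For k ∈ ℤ, define ρ_k : G → GL₂(ℝ) by ρ_k(q,v) = [[q^k, 0], [−q^k v, q^{k+1}]] (a group homomorphism), and let G act on ℝ² by the contragredient action g · w := (ρ_k(g)ᵀ)⁻¹ w. Then there exists a point w₀ ∈ ℝ² whose orbit is free (trivial stabilizer) and has full Lebesgue measure in ℝ² if and only if k is even. -/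
/- The contragredient action is `(q, v) · (a, b) = (q^(-k) a + q^(-k-1) v b, q^(-k-1) b)`. When
`-k-1` is odd (`k` even), `q ↦ q^(-k-1)` is a bijection of `ℝ*`, so the orbit of `(0, 1)` is the
full-measure set `{b ≠ 0}` and is free. When `-k-1` is even, the action preserves the sign of `b`;
a free orbit has `b ≠ 0` (the translations fix the line `b = 0` pointwise) and so misses an open
half-plane. -/

open MeasureTheory Matrix

/-- The representation `ρ_k` of the `ax+b` group `G = ℝ* ⋉ ℝ`:
`ρ_k(q,v) = [[q^k, 0], [−q^k v, q^{k+1}]]`. -/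
noncomputable def rhoK (k : ℤ) (q : ℝˣ) (v : ℝ) : Matrix (Fin 2) (Fin 2) ℝ :=
  !![((q ^ k : ℝˣ) : ℝ), 0; -((q ^ k : ℝˣ) : ℝ) * v, ((q ^ (k + 1) : ℝˣ) : ℝ)]

lemma Odd.eq_one_of_zpow_eq_one {K : Type*} [Field K] [LinearOrder K] [IsStrictOrderedRing K]
    {n : ℤ} (hn : Odd n) {a : K} (h : a ^ n = 1) : a = 1 := by
  have hn0 : n ≠ 0 := by rintro rfl; exact Int.not_odd_zero hn
  have ha : 0 < a := hn.zpow_pos_iff.1 (h ▸ one_pos)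
  exact (zpow_left_inj₀ ha.le zero_le_one hn0).1 (by rw [h, _root_.one_zpow])

lemma Real.zpow_surjective_of_odd {n : ℤ} (hn : Odd n) :
    Function.Surjective fun c : ℝ ↦ c ^ n := by
  have hn0 : n ≠ 0 := by rintro rfl; exact Int.not_odd_zero hn
  have hpos : ∀ y : ℝ, 0 < y → (y ^ (n : ℝ)⁻¹) ^ n = y := fun y hy ↦ by
    rw [← Real.rpow_intCast, ← Real.rpow_mul hy.le, inv_mul_cancel₀ (by exact_mod_cast hn0),
      Real.rpow_one]
  intro y
  rcases lt_trichotomy y 0 with hy | rfl | hy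
  · exact ⟨-(-y) ^ (n : ℝ)⁻¹, by simp only [hn.neg_zpow, hpos (-y) (neg_pos.2 hy), neg_neg]⟩
  · exact ⟨0, zero_zpow n hn0⟩
  · exact ⟨_, hpos y hy⟩

lemma volume_setOf_apply_eq_zero {ι : Type*} [Fintype ι] (i : ι) :
    volume {w : ι → ℝ | w i = 0} = 0 := by
  classical
  let π : (ι → ℝ) →ₗ[ℝ] ℝ := LinearMap.proj i
  refine Measure.addHaar_submodule volume (LinearMap.ker π) fun h ↦ ?_
  have : Pi.single i (1 : ℝ) ∈ LinearMap.ker π := h ▸ Submodule.mem_top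
  simp [π] at this

lemma rhoK_mul (k : ℤ) (q q' : ℝˣ) (v v' : ℝ) :
    rhoK k (q * q') (v + q * v') = rhoK k q v * rhoK k q' v' := by
  rw [rhoK, rhoK, rhoK, mul_fin_two]
  simp only [Units.val_zpow_eq_zpow_val, Units.val_mul, mul_zpow, zpow_add_one₀ q.ne_zero,
    zpow_add_one₀ q'.ne_zero]
  ext i j
  fin_cases i <;> fin_cases j <;> simp; ring

lemma inv_transpose_rhoK (k : ℤ) (q : ℝˣ) (v : ℝ) :
    (rhoK k q v)ᵀ⁻¹ = !![(q : ℝ) ^ (-k), (q : ℝ) ^ (-k - 1) * v; 0, (q : ℝ) ^ (-k - 1)] := by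
  have hq : (q : ℝ) ≠ 0 := q.ne_zero
  refine inv_eq_left_inv ?_
  rw [eta_fin_two (rhoK k q v)ᵀ, mul_fin_two, one_fin_two]
  ext i j
  fin_cases i <;> fin_cases j <;> simp [rhoK, zpow_sub_one₀ hq, zpow_add_one₀ hq, field]

lemma inv_transpose_rhoK_mulVec (k : ℤ) (q : ℝˣ) (v : ℝ) (w : Fin 2 → ℝ) :
    (rhoK k q v)ᵀ⁻¹ *ᵥ w =
      ![(q : ℝ) ^ (-k) * w 0 + (q : ℝ) ^ (-k - 1) * v * w 1, (q : ℝ) ^ (-k - 1) * w 1] := by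
  rw [inv_transpose_rhoK, mulVec_fin_two]
  simp

lemma inv_transpose_rhoK_one_mulVec (k : ℤ) (v : ℝ) {w : Fin 2 → ℝ} (hw : w 1 = 0) :
    (rhoK k 1 v)ᵀ⁻¹ *ᵥ w = w := by
  rw [inv_transpose_rhoK_mulVec]
  ext j
  fin_cases j <;> simp [hw]

lemma inv_transpose_rhoK_mulVec_zero_one (k : ℤ) (q : ℝˣ) (v : ℝ) :
    (rhoK k q v)ᵀ⁻¹ *ᵥ ![0, 1] = ![(q : ℝ) ^ (-k - 1) * v, (q : ℝ) ^ (-k - 1)] := by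
  rw [inv_transpose_rhoK_mulVec]
  simp

lemma stabilizer_zero_one_trivial_of_odd {k : ℤ} (hk : Odd (-k - 1)) {q : ℝˣ} {v : ℝ}
    (h : (rhoK k q v)ᵀ⁻¹ *ᵥ ![0, 1] = ![0, 1]) : q = 1 ∧ v = 0 := by
  rw [inv_transpose_rhoK_mulVec_zero_one] at h
  have hq : (q : ℝ) = 1 := hk.eq_one_of_zpow_eq_one (by simpa using congrFun h 1)
  refine ⟨Units.val_eq_one.1 hq, ?_⟩
  simpa [hq] using congrFun h 0

def rhoKOrbit (k : ℤ) (w₀ : Fin 2 → ℝ) : Set (Fin 2 → ℝ) :=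
  Set.range fun g : ℝˣ × ℝ ↦ (rhoK k g.1 g.2)ᵀ⁻¹ *ᵥ w₀

lemma setOf_apply_one_ne_zero_subset_rhoKOrbit {k : ℤ} (hk : Odd (-k - 1)) :
    {w : Fin 2 → ℝ | w 1 ≠ 0} ⊆ rhoKOrbit k ![0, 1] := by
  intro w (hw : w 1 ≠ 0)
  obtain ⟨c, hc : c ^ (-k - 1) = w 1⟩ := Real.zpow_surjective_of_odd hk (w 1)
  have hc0 : c ≠ 0 := (zpow_ne_zero_iff (fun h ↦ Int.not_odd_zero (h ▸ hk))).1 (hc ▸ hw)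
  refine ⟨(Units.mk0 c hc0, w 0 / w 1), ?_⟩
  simp only [inv_transpose_rhoK_mulVec_zero_one, Units.val_mk0, hc]
  ext j
  fin_cases j <;> simp [mul_div_cancel₀ _ hw]

lemma volume_compl_rhoKOrbit_ne_zero_of_even {k : ℤ} (hk : Even (-k - 1)) {w₀ : Fin 2 → ℝ}
    (hw₀ : w₀ 1 ≠ 0) : volume (rhoKOrbit k w₀)ᶜ ≠ 0 := by
  have hsub : {w : Fin 2 → ℝ | w 1 * w₀ 1 < 0} ⊆ (rhoKOrbit k w₀)ᶜ := by
    rintro _ (hw : _ * w₀ 1 < 0) ⟨⟨q, v⟩, rfl⟩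
    have hpos : 0 < (q : ℝ) ^ (-k - 1) := hk.zpow_pos q.ne_zero
    simp only [inv_transpose_rhoK_mulVec, cons_val_one, cons_val_zero] at hw
    nlinarith [mul_self_pos.2 hw₀]
  refine fun h ↦ (IsOpen.measure_ne_zero volume ?_ ⟨-w₀, ?_⟩) (measure_mono_null hsub h)
  · exact isOpen_lt (by fun_prop) continuous_const
  · simpa using mul_self_pos.2 hw₀

/-- Let `G = ℝ* ⋉ ℝ` be the `ax+b` group with multiplication
`(q,v)(q',v') = (qq', v + qv')`, and for `k ∈ ℤ` let `ρ_k : G → GL₂(ℝ)` be as above (a group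
homomorphism). Let `G` act on `ℝ²` by the contragredient action `g · w = (ρ_k(g)ᵀ)⁻¹ w`. Then
there is a point `w₀ ∈ ℝ²` whose orbit is free and has full Lebesgue measure if and only if
`k` is even. -/
theorem rhoK_free_full_orbit_iff_even (k : ℤ) :
    (∀ (q q' : ℝˣ) (v v' : ℝ),
        rhoK k (q * q') (v + (q : ℝ) * v') = rhoK k q v * rhoK k q' v') ∧
    ((∃ w₀ : Fin 2 → ℝ,
        (∀ (q : ℝˣ) (v : ℝ), ((rhoK k q v)ᵀ)⁻¹.mulVec w₀ = w₀ → q = 1 ∧ v = 0) ∧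
        volume ((Set.range fun g : ℝˣ × ℝ => ((rhoK k g.1 g.2)ᵀ)⁻¹.mulVec w₀)ᶜ) = 0) ↔
      Even k) := by
  refine ⟨rhoK_mul k, fun ⟨w₀, hfree, hfull⟩ ↦ ?_, fun hk ↦ ?_⟩
  · by_contra hk
    have hw₀ : w₀ 1 ≠ 0 := fun h ↦ one_ne_zero (hfree 1 1 (inv_transpose_rhoK_one_mulVec k 1 h)).2
    exact volume_compl_rhoKOrbit_ne_zero_of_even
      ((Int.not_even_iff_odd.1 hk).neg.sub_odd odd_one) hw₀ hfull
  · have hk' : Odd (-k - 1) := hk.neg.sub_odd odd_one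
    refine ⟨![0, 1], fun q v ↦ stabilizer_zero_one_trivial_of_odd hk', ?_⟩
    exact measure_mono_null (fun w hw ↦ not_not.1 fun h ↦ hw
      (setOf_apply_one_ne_zero_subset_rhoKOrbit hk' h)) (volume_setOf_apply_eq_zero 1)
end

section
/- Let G be a second countable locally compact Hausdorff group with left Haar measure μ, let N ⊆ G be a closed subset with μ(N) = 0, let f̃ : N → ℂ be a continuous function with compact support, and let ε > 0. Then there exists a continuous compactly supported function f : G → ℂ such that f restricted to N equals f̃, the supremum of |f| over G equals the supremum of |f̃| over N, and ∫_G |f| dμ < ε. (Any compactly supported continuous function on a closed null set extends to a compactly supported continuous function with the same supremum norm and arbitrarily small L¹-norm.) -/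
/-!
By the Tietze extension theorem for the closed ball of radius `sup ‖f̃‖`, `f̃` extends to a
continuous function on `G` with the same supremum norm. The compact support `K` of `f̃` lies in
the null set `N`, so by outer regularity it has open neighbourhoods of arbitrarily small measure;
cutting the extension off with an Urysohn function that is `1` on `K` and supported in such a
neighbourhood leaves the values on `N` unchanged and makes the `L¹`-norm small.
-/

open MeasureTheory Set Function

theorem ContinuousMap.exists_restrict_eq_forall_norm_le {X E : Type*} [TopologicalSpace X]
    [NormalSpace X] [NormedAddCommGroup E] [NormedSpace ℝ E] [FiniteDimensional ℝ E]
    {s : Set X} (hs : IsClosed s) (f : C(s, E)) {M : ℝ} (hM : 0 ≤ M) (hf : ∀ x, ‖f x‖ ≤ M) :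
    ∃ g : C(X, E), (∀ x, ‖g x‖ ≤ M) ∧ g.restrict s = f := by
  rcases hM.eq_or_lt with rfl | hM
  · refine ⟨0, fun _ => by simp, ?_⟩
    ext x
    simpa using (norm_le_zero_iff.1 (hf x)).symm
  · have := Metric.instTietzeExtensionClosedBall ℝ (0 : E) hM
    simpa using f.exists_forall_mem_restrict_eq hs (t := Metric.closedBall 0 M) (by simpa using hf)

theorem IsCompact.exists_continuousMap_one_measure_tsupport_lt {X : Type*} [TopologicalSpace X]
    [R1Space X] [LocallyCompactSpace X] [MeasurableSpace X] {μ : Measure X} [μ.OuterRegular]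
    {K : Set X} (hK : IsCompact K) {r : ENNReal} (hr : μ K < r) :
    ∃ χ : C(X, ℝ), EqOn χ 1 K ∧ HasCompactSupport χ ∧ μ (tsupport χ) < r ∧
      ∀ x, χ x ∈ Icc 0 1 := by
  obtain ⟨U, hKU, hU, hUr⟩ := K.exists_isOpen_lt_of_lt r hr
  obtain ⟨χ, hχK, hχc, hχU, hχ01⟩ :=
    exists_continuousMap_one_of_isCompact_subset_isOpen hK hU hKU
  exact ⟨χ, hχK, hχc, (measure_mono hχU).trans_lt hUr, hχ01⟩

theorem integral_norm_le_of_support_subset {X E : Type*} [MeasurableSpace X] {μ : Measure X}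
    [SeminormedAddCommGroup E] {f : X → E} {s : Set X} (hs : μ s < ⊤) (hfs : support f ⊆ s)
    {M : ℝ} (hM : ∀ x, ‖f x‖ ≤ M) : ∫ x, ‖f x‖ ∂μ ≤ M * μ.real s := by
  rw [← setIntegral_eq_integral_of_forall_compl_eq_zero fun x hx => by
    rw [notMem_support.1 (mt (@hfs x) hx), norm_zero]]
  exact (le_abs_self _).trans <| by
    simpa using norm_setIntegral_le_of_norm_le_const hs fun x _ => (norm_norm (f x)).trans_le (hM x)

theorem iSup_norm_eq_of_extends_of_norm_le {X E : Type*} [SeminormedAddCommGroup E] {s : Set X}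
    {φ : s → E} {f : X → E} (hfφ : ∀ x : s, f x = φ x) (hf : ∀ x, ‖f x‖ ≤ ⨆ y : s, ‖φ y‖) :
    ⨆ x, ‖f x‖ = ⨆ y : s, ‖φ y‖ := by
  refine le_antisymm (Real.iSup_le hf (Real.iSup_nonneg fun _ => norm_nonneg _))
    (Real.iSup_le (fun y => ?_) (Real.iSup_nonneg fun _ => norm_nonneg _))
  exact hfφ y ▸ le_ciSup ⟨_, forall_mem_range.2 hf⟩ (y : X)

theorem smul_eq_of_eqOn_one_tsupport {X E : Type*} [TopologicalSpace X] [AddCommGroup E]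
    [Module ℝ E] {s : Set X} {φ : s → E} {g : X → E} (hg : ∀ x : s, g x = φ x) {χ : X → ℝ}
    (hχ : EqOn χ 1 ((↑) '' tsupport φ)) (x : s) : χ x • g x = φ x := by
  by_cases hx : x ∈ tsupport φ
  · rw [hχ (mem_image_of_mem _ hx), Pi.one_apply, one_smul, hg]
  · rw [hg, image_eq_zero_of_notMem_tsupport hx, smul_zero]

theorem extension_from_closed_null_set_general
    (G : Type*) [Group G] [TopologicalSpace G] [LocallyCompactSpace G]
    [T2Space G] [SecondCountableTopology G] [MeasurableSpace G] [BorelSpace G]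
    (μ : Measure G) [μ.IsHaarMeasure]
    (N : Set G) (hNclosed : IsClosed N) (hNnull : μ N = 0)
    (ftilde : N → ℂ) (hfc : Continuous ftilde) (hfs : HasCompactSupport ftilde)
    (ε : ℝ) (hε : 0 < ε) :
    ∃ f : G → ℂ, Continuous f ∧ HasCompactSupport f ∧
      (∀ x : N, f x = ftilde x) ∧
      (⨆ x : G, ‖f x‖) = (⨆ x : N, ‖ftilde x‖) ∧
      (∫ x, ‖f x‖ ∂μ) < ε := by
  set M := ⨆ x : N, ‖ftilde x‖
  have hM0 : 0 ≤ M := Real.iSup_nonneg fun _ => norm_nonneg _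
  have hfM : ∀ x, ‖ftilde x‖ ≤ M :=
    le_ciSup (hfc.norm.bddAbove_range_of_hasCompactSupport hfs.norm)
  obtain ⟨g, hgM, hgN⟩ :=
    ContinuousMap.exists_restrict_eq_forall_norm_le hNclosed ⟨ftilde, hfc⟩ hM0 hfM
  set K : Set G := (↑) '' tsupport ftilde
  have hKnull : μ K = 0 := measure_mono_null (image_subset_iff.2 fun x _ => x.2) hNnull
  have hδ : μ K < ENNReal.ofReal (ε / (M + 1)) := by
    rw [hKnull, ENNReal.ofReal_pos]
    positivity
  obtain ⟨χ, hχK, hχc, hχμ, hχ01⟩ :=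
    (hfs.image continuous_subtype_val).exists_continuousMap_one_measure_tsupport_lt hδ
  have hfN : ∀ x : N, χ x • g x = ftilde x :=
    smul_eq_of_eqOn_one_tsupport (fun x => congr($hgN x)) hχK
  have hfbound : ∀ x, ‖χ x • g x‖ ≤ M := fun x => by
    rw [norm_smul, Real.norm_of_nonneg (hχ01 x).1]
    exact (mul_le_of_le_one_left (norm_nonneg _) (hχ01 x).2).trans (hgM x)
  refine ⟨fun x => χ x • g x, by fun_prop, hχc.smul_right, hfN,
    iSup_norm_eq_of_extends_of_norm_le hfN hfbound, ?_⟩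
  have hμ : μ.real (tsupport χ) < ε / (M + 1) := ENNReal.toReal_lt_of_lt_ofReal hχμ
  calc ∫ x, ‖χ x • g x‖ ∂μ ≤ M * μ.real (tsupport χ) :=
        integral_norm_le_of_support_subset (hχμ.trans ENNReal.ofReal_lt_top)
          ((support_smul_subset_left _ _).trans (subset_tsupport χ)) hfbound
    _ < ε := by
        rw [lt_div_iff₀ (by positivity)] at hμ
        nlinarith [measureReal_nonneg (μ := μ) (s := tsupport χ)]

/-- Let `G` be a second countable locally compact Hausdorff group with left
Haar measure `μ`, let `N ⊆ G` be a closed subset with `μ(N) = 0`, let `f̃ : N → ℂ` be a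
continuous function with compact support, and let `ε > 0`. Then `f̃` extends to a continuous
compactly supported function `f : G → ℂ` with the same supremum norm and with `L¹`-norm smaller
than `ε`. -/
theorem extension_from_closed_null_set
    (G : Type*) [Group G] [TopologicalSpace G] [IsTopologicalGroup G] [LocallyCompactSpace G]
    [T2Space G] [SecondCountableTopology G] [MeasurableSpace G] [BorelSpace G]
    (μ : Measure G) [μ.IsHaarMeasure]
    (N : Set G) (hNclosed : IsClosed N) (hNnull : μ N = 0)
    (ftilde : N → ℂ) (hfc : Continuous ftilde) (hfs : HasCompactSupport ftilde)
    (ε : ℝ) (hε : 0 < ε) :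
    ∃ f : G → ℂ, Continuous f ∧ HasCompactSupport f ∧
      (∀ x : N, f x = ftilde x) ∧
      (⨆ x : G, ‖f x‖) = (⨆ x : N, ‖ftilde x‖) ∧
      (∫ x, ‖f x‖ ∂μ) < ε :=
  extension_from_closed_null_set_general G μ N hNclosed hNnull ftilde hfc hfs ε hε
end
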